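/- arXiv:1608.03689 — 11 statements merged into one kernel-verified Lean document; each statement's English description precedes it below -/
import Mathlib

section
/- Let G be an index coding instance on n ≥ 1 messages, q a positive integer, t = (t_1,…,t_n) a tuple of positive integers, j ∈ [n], and l ∈ [t_j]. Then the component confusion graph Γ_t^{(jl)}(G) has no chordless cycle of length greater than four: for every k ≥ 5 and every list of k pairwise distinct vertices v_1,…,v_k of Γ_t^{(jl)}(G) such that v_1 ∼ v_2, v_2 ∼ v_3, …, v_{k−1} ∼ v_k, and v_k ∼ v_1, there exist indices a, b ∈ [k] that are not cyclically consecutive (b ≢ a±1 mod k and a ≠ b) with v_a adjacent to v_b in Γ_t^{(jl)}(G). -/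
namespace IC

/-- Two message tuples (with `x_i ∈ {0,…,q−1}^{t_i}`) are confusable at
position `l` of node `j` for the directed graph with edge relation `E`. -/
def ConfusableAt {n q : ℕ} (E : Fin n → Fin n → Prop) (t : Fin n → ℕ)
    (j : Fin n) (l : Fin (t j))
    (x z : ∀ i : Fin n, Fin (t i) → Fin q) : Prop :=
  x j l ≠ z j l ∧ ∀ i : Fin n, E i j → x i = z i

/-- The component confusion graph `Γ_t^{(jl)}(G)`. -/
def componentConfusionGraph {n : ℕ} (q : ℕ) (E : Fin n → Fin n → Prop) (t : Fin n → ℕ)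
    (j : Fin n) (l : Fin (t j)) :
    SimpleGraph (∀ i : Fin n, Fin (t i) → Fin q) where
  Adj x z := ConfusableAt E t j l x z
  symm := ⟨fun _ _ ⟨h1, h2⟩ => ⟨h1.symm, fun i hi => (h2 i hi).symm⟩⟩
  loopless := ⟨fun _ ⟨h1, _⟩ => h1 rfl⟩

/-- The confusion graph `Γ_t(G)`. -/
def confusionGraph {n : ℕ} (q : ℕ) (E : Fin n → Fin n → Prop) (t : Fin n → ℕ) :
    SimpleGraph (∀ i : Fin n, Fin (t i) → Fin q) where
  Adj x z := ∃ (j : Fin n) (l : Fin (t j)), ConfusableAt E t j l x z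
  symm := ⟨fun _ _ ⟨j, l, h1, h2⟩ => ⟨j, l, h1.symm, fun i hi => (h2 i hi).symm⟩⟩
  loopless := ⟨fun _ ⟨_, _, h1, _⟩ => h1 rfl⟩

end IC

/-! Adjacent message tuples agree on the side information of node `j`, so within a connected
component of `Γ_t^{(jl)}(G)` adjacency only depends on the coordinate `x_{jl}`: each component is
complete multipartite, with parts the level sets of `x_{jl}`. Along a cycle of length at least
five, either `v₀` and `v₂` differ at `(j, l)`, or `v₀` and `v₃` do, since `v₂` and `v₃` differ there;
either pair is a chord. -/

theorem Fin.exists_ne_nonconsecutive_of_forall_ne_add_one {β : Type*} {k : ℕ} (c : Fin (k + 5) → β)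
    (hc : ∀ i, c i ≠ c (i + 1)) :
    ∃ a b : Fin (k + 5), a ≠ b ∧ b ≠ a + 1 ∧ a ≠ b + 1 ∧ c a ≠ c b := by
  have h23 : c 2 ≠ c 3 := by simpa [show (2 : Fin (k + 5)) + 1 = 3 by rfl] using hc 2
  by_cases h02 : c 0 = c 2
  · refine ⟨0, 3, ?_, ?_, ?_, fun h03 => h23 (h02 ▸ h03)⟩ <;>
      simp [Fin.ext_iff, Fin.val_add, Nat.mod_eq_of_lt]
  · refine ⟨0, 2, ?_, ?_, ?_, h02⟩ <;> simp [Fin.ext_iff, Fin.val_add, Nat.mod_eq_of_lt]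

theorem SimpleGraph.reachable_of_adj_add_one {V : Type*} {G : SimpleGraph V} {n : ℕ}
    {v : Fin (n + 1) → V} (hv : ∀ i, G.Adj (v i) (v (i + 1))) (a b : Fin (n + 1)) :
    G.Reachable (v a) (v b) := by
  have from_zero : ∀ a, G.Reachable (v 0) (v a) := by
    refine Fin.induction .rfl fun i hi => hi.trans ?_
    rw [← Fin.coeSucc_eq_succ]
    exact (hv _).reachable
  exact (from_zero a).symm.trans (from_zero b)

namespace IC

variable {n q : ℕ} {E : Fin n → Fin n → Prop} {t : Fin n → ℕ} {j : Fin n} {l : Fin (t j)}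
  {x z : ∀ i : Fin n, Fin (t i) → Fin q}

theorem componentConfusionGraph.eq_of_reachable
    (h : (componentConfusionGraph q E t j l).Reachable x z) {i : Fin n} (hi : E i j) :
    x i = z i := by
  rw [SimpleGraph.reachable_iff_reflTransGen] at h
  induction h with
  | refl => rfl
  | tail _ hadj ih => exact ih.trans (hadj.2 i hi)

theorem componentConfusionGraph.adj_of_reachable
    (h : (componentConfusionGraph q E t j l).Reachable x z) (hne : x j l ≠ z j l) :
    (componentConfusionGraph q E t j l).Adj x z :=
  ⟨hne, fun _ hi => eq_of_reachable h hi⟩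

end IC

theorem componentConfusionGraph_no_long_chordless_cycle_general
    (n q : ℕ)
    (E : Fin n → Fin n → Prop)
    (t : Fin n → ℕ)
    (j : Fin n) (l : Fin (t j)) :
    ∀ (k : ℕ) (v : Fin (k + 5) → (∀ i : Fin n, Fin (t i) → Fin q)),
      Function.Injective v →
      (∀ i : Fin (k + 5),
        (IC.componentConfusionGraph q E t j l).Adj (v i) (v (i + 1))) →
      ∃ a b : Fin (k + 5), a ≠ b ∧ b ≠ a + 1 ∧ a ≠ b + 1 ∧
        (IC.componentConfusionGraph q E t j l).Adj (v a) (v b) := by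
  intro k v _ hadj
  obtain ⟨a, b, hab, hba, hab', hne⟩ :=
    Fin.exists_ne_nonconsecutive_of_forall_ne_add_one (fun i => v i j l) fun i => (hadj i).1
  exact ⟨a, b, hab, hba, hab',
    IC.componentConfusionGraph.adj_of_reachable (SimpleGraph.reachable_of_adj_add_one hadj a b) hne⟩

/-- The component confusion graph `Γ_t^{(jl)}(G)` has no
chordless cycle of length greater than four: every cycle on `k + 5` pairwise
distinct vertices has a chord. -/
theorem componentConfusionGraph_no_long_chordless_cycle
    (n q : ℕ) (hn : 1 ≤ n) (hq : 1 ≤ q)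
    (E : Fin n → Fin n → Prop) (hE : ∀ i, ¬ E i i)
    (t : Fin n → ℕ) (ht : ∀ j, 1 ≤ t j)
    (j : Fin n) (l : Fin (t j)) :
    ∀ (k : ℕ) (v : Fin (k + 5) → (∀ i : Fin n, Fin (t i) → Fin q)),
      Function.Injective v →
      (∀ i : Fin (k + 5),
        (IC.componentConfusionGraph q E t j l).Adj (v i) (v (i + 1))) →
      ∃ a b : Fin (k + 5), a ≠ b ∧ b ≠ a + 1 ∧ a ≠ b + 1 ∧
        (IC.componentConfusionGraph q E t j l).Adj (v a) (v b) :=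
  componentConfusionGraph_no_long_chordless_cycle_general n q E t j l
end

section
/- Let G be an index coding instance on n ≥ 1 messages, q a positive integer, t = (t_1,…,t_n) a tuple of positive integers, j ∈ [n], and l ∈ [t_j]. Then the complement of the component confusion graph Γ_t^{(jl)}(G) has no chordless cycle of length greater than four: for every k ≥ 5 and every list of k pairwise distinct vertices v_1,…,v_k such that v_1 ∼ v_2, v_2 ∼ v_3, …, v_{k−1} ∼ v_k, and v_k ∼ v_1 in the complement graph, there exist indices a, b ∈ [k] that are not cyclically consecutive (b ≢ a±1 mod k and a ≠ b) with v_a adjacent to v_b in the complement graph. -/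
theorem Fin.nonconsecutive_self_add {m : ℕ} [NeZero m] (a c : Fin m) (h0 : c ≠ 0) (h1 : c ≠ 1)
    (hneg : c + 1 ≠ 0) : a ≠ a + c ∧ a + c ≠ a + 1 ∧ a ≠ a + c + 1 :=
  ⟨by simpa using h0, by simpa using h1, by simpa [add_assoc] using hneg⟩

namespace IC

variable {V α β : Type*}

def keyedConfusionGraph (key : V → α) (val : V → β) : SimpleGraph V where
  Adj x z := key x = key z ∧ val x ≠ val z
  symm := ⟨fun _ _ ⟨hkey, hval⟩ => ⟨hkey.symm, hval.symm⟩⟩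
  loopless := ⟨fun _ ⟨_, hval⟩ => hval rfl⟩

theorem componentConfusionGraph_eq_keyedConfusionGraph {n : ℕ} (q : ℕ)
    (E : Fin n → Fin n → Prop) (t : Fin n → ℕ) (j : Fin n) (l : Fin (t j)) :
    componentConfusionGraph q E t j l =
      keyedConfusionGraph
        (fun (x : ∀ i, Fin (t i) → Fin q) (i : {i // E i j}) => x i) (fun x => x j l) := by
  ext x z
  exact ⟨fun ⟨hval, hkey⟩ => ⟨funext fun i => hkey i i.2, hval⟩,
    fun ⟨hkey, hval⟩ => ⟨hval, fun i hi => congrFun hkey ⟨i, hi⟩⟩⟩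

theorem compl_keyedConfusionGraph_exists_chord (key : V → α) (val : V → β) {k : ℕ}
    (v : Fin (k + 5) → V) (hv : Function.Injective v)
    (hcyc : ∀ i, (keyedConfusionGraph key val)ᶜ.Adj (v i) (v (i + 1))) :
    ∃ a b : Fin (k + 5), a ≠ b ∧ b ≠ a + 1 ∧ a ≠ b + 1 ∧
      (keyedConfusionGraph key val)ᶜ.Adj (v a) (v b) := by
  by_contra! hchordless
  have chord : ∀ a c : Fin (k + 5), c ≠ 0 → c ≠ 1 → c + 1 ≠ 0 →
      key (v a) = key (v (a + c)) ∧ val (v a) ≠ val (v (a + c)) := fun a c h0 h1 hneg => by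
    obtain ⟨hne, hsucc, hpred⟩ := Fin.nonconsecutive_self_add a c h0 h1 hneg
    by_contra hadj
    exact hchordless a _ hne hsucc hpred ((SimpleGraph.compl_adj _ _ _).2 ⟨hv.ne hne, hadj⟩)
  have chord_two (a : Fin (k + 5)) := chord a 2
    (by simp [Fin.ext_iff, Nat.mod_eq_of_lt]) (by simp [Fin.ext_iff, Nat.mod_eq_of_lt])
    (by simp [Fin.ext_iff, Fin.val_add, Nat.mod_eq_of_lt])
  have chord_three (a : Fin (k + 5)) := chord a 3
    (by simp [Fin.ext_iff, Nat.mod_eq_of_lt]) (by simp [Fin.ext_iff, Nat.mod_eq_of_lt])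
    (by simp [Fin.ext_iff, Fin.val_add, Nat.mod_eq_of_lt])
  have key_succ (a : Fin (k + 5)) : key (v a) = key (v (a + 1)) := by
    have h := (chord_two (a + 1)).1
    rw [add_assoc, show (1 + 2 : Fin (k + 5)) = 3 from rfl] at h
    exact (chord_three a).1.trans h.symm
  have val_succ (a : Fin (k + 5)) : val (v a) = val (v (a + 1)) := by
    by_contra hne
    exact ((SimpleGraph.compl_adj _ _ _).1 (hcyc a)).2 ⟨key_succ a, hne⟩
  have val_two : val (v 0) = val (v (0 + 2)) := by
    rw [show (0 + 2 : Fin (k + 5)) = 0 + 1 + 1 from rfl]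
    exact (val_succ 0).trans (val_succ (0 + 1))
  exact (chord_two 0).2 val_two

end IC

theorem compl_componentConfusionGraph_no_long_chordless_cycle_general
    (n q : ℕ)
    (E : Fin n → Fin n → Prop)
    (t : Fin n → ℕ)
    (j : Fin n) (l : Fin (t j)) :
    ∀ (k : ℕ) (v : Fin (k + 5) → (∀ i : Fin n, Fin (t i) → Fin q)),
      Function.Injective v →
      (∀ i : Fin (k + 5),
        (IC.componentConfusionGraph q E t j l)ᶜ.Adj (v i) (v (i + 1))) →
      ∃ a b : Fin (k + 5), a ≠ b ∧ b ≠ a + 1 ∧ a ≠ b + 1 ∧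
        (IC.componentConfusionGraph q E t j l)ᶜ.Adj (v a) (v b) := by
  intro k v hv hcyc
  rw [IC.componentConfusionGraph_eq_keyedConfusionGraph] at hcyc ⊢
  exact IC.compl_keyedConfusionGraph_exists_chord _ _ v hv hcyc

/-- The complement of the component confusion graph
`Γ_t^{(jl)}(G)` has no chordless cycle of length greater than four: every cycle
on `k + 5` pairwise distinct vertices of the complement graph has a chord. -/
theorem compl_componentConfusionGraph_no_long_chordless_cycle
    (n q : ℕ) (hn : 1 ≤ n) (hq : 1 ≤ q)
    (E : Fin n → Fin n → Prop) (hE : ∀ i, ¬ E i i)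
    (t : Fin n → ℕ) (ht : ∀ j, 1 ≤ t j)
    (j : Fin n) (l : Fin (t j)) :
    ∀ (k : ℕ) (v : Fin (k + 5) → (∀ i : Fin n, Fin (t i) → Fin q)),
      Function.Injective v →
      (∀ i : Fin (k + 5),
        (IC.componentConfusionGraph q E t j l)ᶜ.Adj (v i) (v (i + 1))) →
      ∃ a b : Fin (k + 5), a ≠ b ∧ b ≠ a + 1 ∧ a ≠ b + 1 ∧
        (IC.componentConfusionGraph q E t j l)ᶜ.Adj (v a) (v b) :=
  compl_componentConfusionGraph_no_long_chordless_cycle_general n q E t j l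
end

section
/- Let G be an index coding instance on n ≥ 1 messages, q a positive integer, t = (t_1,…,t_n) a tuple of positive integers, j ∈ [n], and l ∈ [t_j]. Then the component confusion graph Γ_t^{(jl)}(G) is perfect: for every subset W of its vertex set, the chromatic number of the subgraph induced by W equals the clique number of the subgraph induced by W. -/
open Finset

namespace Finset

variable {α : Type*} [LinearOrder α] {s : Finset α} {a c : α}

theorem card_filter_lt_lt_card (ha : a ∈ s) : #{b ∈ s | b < a} < #s :=
  card_lt_card <| filter_ssubset.2 ⟨a, ha, lt_irrefl a⟩

theorem card_filter_lt_lt_card_filter_lt (ha : a ∈ s) (hac : a < c) :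
    #{b ∈ s | b < a} < #{b ∈ s | b < c} :=
  card_lt_card <| (ssubset_iff_of_subset <| monotone_filter_right s fun _ _ hb => hb.trans hac).2
    ⟨a, mem_filter.2 ⟨ha, hac⟩, fun h => lt_irrefl a (mem_filter.1 h).2⟩

theorem injOn_card_filter_lt : Set.InjOn (fun a => #{b ∈ s | b < a}) s := by
  intro a ha c hc hac
  by_contra hne
  rcases lt_or_gt_of_ne hne with h | h
  · exact (card_filter_lt_lt_card_filter_lt ha h).ne hac
  · exact (card_filter_lt_lt_card_filter_lt hc h).ne' hac

end Finset

namespace SimpleGraph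

variable {V α β : Type*} [Fintype V] {G : SimpleGraph V} {f : V → α} {g : V → β}

theorem card_image_fiber_le_cliqueNum [DecidableEq α] [DecidableEq β]
    (hG : ∀ x z, G.Adj x z ↔ g x = g z ∧ f x ≠ f z) (b : β) :
    #(({x | g x = b} : Finset V).image f) ≤ G.cliqueNum := by
  obtain ⟨u, hu, hinj, himg⟩ := exists_subset_injOn_image_eq_of_surjOn (f := f)
    {x | g x = b} (({x | g x = b} : Finset V).image f) (by intro a; simp)
  have hclique : G.IsClique (u : Set V) := fun x hx z hz hxz =>
    (hG x z).2 ⟨(hu hx).trans (hu hz).symm, fun h => hxz (hinj hx hz h)⟩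
  rw [← himg, card_image_of_injOn hinj]
  exact hclique.card_le_cliqueNum

theorem colorable_cliqueNum_of_adj_iff [LinearOrder α]
    (hG : ∀ x z, G.Adj x z ↔ g x = g z ∧ f x ≠ f z) : G.Colorable G.cliqueNum := by
  classical
  let values (b : β) : Finset α := ({x | g x = b} : Finset V).image f
  have hmem (x : V) : f x ∈ values (g x) := mem_image_of_mem f (by simp)
  refine ⟨⟨fun x => ⟨#{a ∈ values (g x) | a < f x}, (card_filter_lt_lt_card (hmem x)).trans_le
    (card_image_fiber_le_cliqueNum hG _)⟩, fun {x z} hxz hcol => ?_⟩⟩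
  obtain ⟨hg, hf⟩ := (hG x z).1 hxz
  have hrank : #{a ∈ values (g z) | a < f x} = #{a ∈ values (g z) | a < f z} := by
    simpa only [hg, Fin.mk.injEq] using hcol
  exact hf (injOn_card_filter_lt (hg ▸ hmem x) (hmem z) hrank)

theorem chromaticNumber_eq_cliqueNum_of_adj_iff
    (hG : ∀ x z, G.Adj x z ↔ g x = g z ∧ f x ≠ f z) : G.chromaticNumber = G.cliqueNum := by
  classical
  let : LinearOrder α := linearOrderOfSTO WellOrderingRel
  exact (colorable_cliqueNum_of_adj_iff hG).chromaticNumber_le.antisymm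
    G.cliqueNum_le_chromaticNumber

end SimpleGraph

theorem componentConfusionGraph_perfect_general
    (n q : ℕ)
    (E : Fin n → Fin n → Prop)
    (t : Fin n → ℕ)
    (j : Fin n) (l : Fin (t j)) :
    ∀ W : Set (∀ i : Fin n, Fin (t i) → Fin q),
      ((IC.componentConfusionGraph q E t j l).induce W).chromaticNumber =
        ((((IC.componentConfusionGraph q E t j l).induce W).cliqueNum : ℕ) : ℕ∞) := by
  intro W
  have : Fintype W := Fintype.ofFinite W
  refine SimpleGraph.chromaticNumber_eq_cliqueNum_of_adj_iff
    (g := fun x (i : {i // E i j}) => x.1 i) (f := fun x => x.1 j l) fun x z => ?_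
  simp [IC.componentConfusionGraph, IC.ConfusableAt, funext_iff, and_comm]

/-- The component confusion graph `Γ_t^{(jl)}(G)` is perfect:
every vertex-induced subgraph has chromatic number equal to clique number. -/
theorem componentConfusionGraph_perfect
    (n q : ℕ) (hn : 1 ≤ n) (hq : 1 ≤ q)
    (E : Fin n → Fin n → Prop) (hE : ∀ i, ¬ E i i)
    (t : Fin n → ℕ) (ht : ∀ j, 1 ≤ t j)
    (j : Fin n) (l : Fin (t j)) :
    ∀ W : Set (∀ i : Fin n, Fin (t i) → Fin q),
      ((IC.componentConfusionGraph q E t j l).induce W).chromaticNumber =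
        ((((IC.componentConfusionGraph q E t j l).induce W).cliqueNum : ℕ) : ℕ∞) :=
  componentConfusionGraph_perfect_general n q E t j l
end

section
/- Let G be an index coding instance on n ≥ 1 messages and t ≥ 1 an integer. Then a (t, r) index code for G exists if and only if 2^r ≥ χ(Γ_t(G)); equivalently, the minimum integer r ≥ 0 for which a (t, r) index code for G exists equals ⌈log₂ χ(Γ_t(G))⌉. -/
namespace IC

/-- A `(t, r)` index code (with per-message lengths `t j` bits and index length
`r` bits) exists for the directed graph with edge relation `E` on vertex set `V`:
there are an encoder `φ` and, for each node `j`, a decoder `ψ j` that recovers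
message `x j` from the index `φ x` and the side information `(x i)_{i ∈ A_j}`. -/
def HasCode {V : Type*} (E : V → V → Prop) (t : V → ℕ) (r : ℕ) : Prop :=
  ∃ (φ : (∀ j : V, Fin (t j) → Fin 2) → (Fin r → Fin 2))
    (ψ : ∀ j : V, (Fin r → Fin 2) → (∀ i : {i : V // E i j}, Fin (t i.1) → Fin 2) →
      (Fin (t j) → Fin 2)),
    ∀ (x : ∀ j : V, Fin (t j) → Fin 2) (j : V),
      ψ j (φ x) (fun i => x i.1) = x j

/-- The broadcast rate `β = inf { r/t : a (t, r) index code exists }`. -/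
noncomputable def broadcastRate {V : Type*} (E : V → V → Prop) : ℝ :=
  sInf {ρ : ℝ | ∃ (t r : ℕ), 1 ≤ t ∧ HasCode E (fun _ => t) r ∧ ρ = (r : ℝ) / t}

end IC


/-!
An encoder is exactly a proper colouring of the confusion graph with the `2 ^ r` possible indices:
two tuples that are confusable at node `j` agree on the side information of `j`, so a decoder can
tell them apart only if their indices differ; conversely, given a colouring, node `j` decodes by
picking any tuple with the received colour and its own side information, and properness forces
that tuple to agree with the true one at `j`.
-/

namespace IC

variable {n q : ℕ} {E : Fin n → Fin n → Prop} {t : Fin n → ℕ}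

theorem apply_eq_of_color_eq {α : Type*} (C : (confusionGraph q E t).Coloring α)
    {x z : ∀ i : Fin n, Fin (t i) → Fin q} {j : Fin n} (hC : C x = C z)
    (hside : ∀ i, E i j → x i = z i) : x j = z j := by
  by_contra hne
  obtain ⟨l, hl⟩ := Function.ne_iff.1 hne
  exact C.valid ⟨j, l, hl, hside⟩ hC

variable {r : ℕ}

theorem HasCode.colorable (h : HasCode E t r) : (confusionGraph 2 E t).Colorable (2 ^ r) := by
  obtain ⟨φ, ψ, hψ⟩ := h
  let C : (confusionGraph 2 E t).Coloring (Fin r → Fin 2) :=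
    SimpleGraph.Coloring.mk φ fun {x z} ⟨j, l, hne, hside⟩ hφ => hne <| congrFun (a := l) <|
      calc x j = ψ j (φ x) (fun i => x i.1) := (hψ x j).symm
        _ = ψ j (φ z) (fun i => z i.1) := by
          rw [hφ]; congr 1; funext i; exact hside i.1 i.2
        _ = z j := hψ z j
  simpa using C.colorable

theorem hasCode_of_colorable (h : (confusionGraph 2 E t).Colorable (2 ^ r)) : HasCode E t r := by
  classical
  obtain ⟨C⟩ := h
  let φ x := finFunctionFinEquiv.symm (C x)
  refine ⟨φ, fun j w a =>
    if h : ∃ z, φ z = w ∧ ∀ i : {i // E i j}, z i.1 = a i then h.choose j else 0, fun x j => ?_⟩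
  have hx : ∃ z, φ z = φ x ∧ ∀ i : {i // E i j}, z i.1 = x i.1 := ⟨x, rfl, fun _ => rfl⟩
  obtain ⟨hφ, hside⟩ := hx.choose_spec
  dsimp only
  rw [dif_pos hx]
  exact apply_eq_of_color_eq C (finFunctionFinEquiv.symm.injective hφ)
    fun i hi => hside ⟨i, hi⟩

theorem hasCode_iff_colorable : HasCode E t r ↔ (confusionGraph 2 E t).Colorable (2 ^ r) :=
  ⟨HasCode.colorable, hasCode_of_colorable⟩

end IC

theorem Nat.sInf_setOf_le_pow_eq_clog {b : ℕ} (hb : 1 < b) (k : ℕ) :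
    sInf {r : ℕ | k ≤ b ^ r} = Nat.clog b k := by
  simp_rw [← Nat.clog_le_iff_le_pow hb]
  exact csInf_Ici

theorem hasCode_iff_two_pow_ge_chromaticNumber_general
    (n : ℕ)
    (E : Fin n → Fin n → Prop)
    (t : ℕ) :
    (∀ r : ℕ, IC.HasCode E (fun _ => t) r ↔
      (IC.confusionGraph 2 E (fun _ => t)).chromaticNumber ≤ ((2 ^ r : ℕ) : ℕ∞)) ∧
    sInf {r : ℕ | IC.HasCode E (fun _ => t) r} =
      Nat.clog 2 ((IC.confusionGraph 2 E (fun _ => t)).chromaticNumber.toNat) := by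
  set G := IC.confusionGraph 2 E (fun _ => t)
  have hcode (r : ℕ) : IC.HasCode E (fun _ => t) r ↔ G.chromaticNumber ≤ ((2 ^ r : ℕ) : ℕ∞) := by
    rw [IC.hasCode_iff_colorable, SimpleGraph.chromaticNumber_le_iff_colorable]
  refine ⟨hcode, ?_⟩
  obtain ⟨k, hk⟩ : ∃ k : ℕ, k = G.chromaticNumber :=
    ENat.ne_top_iff_exists.1 (G.chromaticNumber_ne_top_iff_exists.2 ⟨_, G.colorable_of_fintype⟩)
  simp_rw [hcode, ← hk, Nat.cast_le, ENat.toNat_natCast]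
  exact Nat.sInf_setOf_le_pow_eq_clog one_lt_two _

/-- A `(t, r)` index code for `G` exists iff `2^r ≥ χ(Γ_t(G))`;
equivalently, the minimum `r` for which a `(t, r)` index code exists equals
`⌈log₂ χ(Γ_t(G))⌉`. -/
theorem hasCode_iff_two_pow_ge_chromaticNumber
    (n : ℕ) (hn : 1 ≤ n)
    (E : Fin n → Fin n → Prop) (hE : ∀ i, ¬ E i i)
    (t : ℕ) (ht : 1 ≤ t) :
    (∀ r : ℕ, IC.HasCode E (fun _ => t) r ↔
      (IC.confusionGraph 2 E (fun _ => t)).chromaticNumber ≤ ((2 ^ r : ℕ) : ℕ∞)) ∧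
    sInf {r : ℕ | IC.HasCode E (fun _ => t) r} =
      Nat.clog 2 ((IC.confusionGraph 2 E (fun _ => t)).chromaticNumber.toNat) :=
  hasCode_iff_two_pow_ge_chromaticNumber_general n E t
end

section
/- Let G be an index coding instance on n ≥ 1 messages and t, k ≥ 1 integers. Under the natural bijection identifying ({0,1}^{tk})^n with (({0,1}^t)^n)^k (splitting the tk-bit string of each message into k consecutive blocks of t bits), the clique number of the confusion graph Γ_{tk}(G) is at most the independence number of the k-fold strong product of the complement of Γ_t(G): ω(Γ_{tk}(G)) ≤ α( (Γ_t(G))ᶜ ^{⊠k} ). -/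
namespace IC

/-- The `k`-fold strong product of an undirected graph with itself. -/
def strongPow {V : Type*} (U : SimpleGraph V) (k : ℕ) : SimpleGraph (Fin k → V) where
  Adj f g := f ≠ g ∧ ∀ i, f i = g i ∨ U.Adj (f i) (g i)
  symm := ⟨fun _ _ ⟨h1, h2⟩ => ⟨h1.symm, fun i => (h2 i).imp Eq.symm U.adj_symm⟩⟩
  loopless := ⟨fun _ ⟨h1, _⟩ => h1 rfl⟩

/-- The independence number `α`. -/
noncomputable def indepNum {V : Type*} (U : SimpleGraph V) : ℕ :=
  sSup {k | ∃ s : Finset V, s.card = k ∧ ∀ a ∈ s, ∀ b ∈ s, a ≠ b → ¬ U.Adj a b}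

/-- The Shannon capacity `Θ(U) = sup_{k ≥ 1} α(U^{⊠k})^{1/k}`. -/
noncomputable def shannonCapacity {V : Type*} (U : SimpleGraph V) : ℝ :=
  ⨆ k : ℕ, (indepNum (strongPow U (k + 1)) : ℝ) ^ ((1 : ℝ) / (k + 1))

end IC

/-!
Split the `t k` bits of every message into `k` consecutive blocks of `t` bits. If two tuples are
confusable at some bit of node `j`, they agree on the side information of `j`, hence so do their
`m`-th blocks for every `m`, and they are confusable in the block `m` containing that bit. So the
splitting map sends adjacent vertices of `Γ_{tk}(G)` to tuples of blocks that are adjacent in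
`Γ_t(G)` in some coordinate, i.e. distinct and non-adjacent in `(Γ_t(G)ᶜ)^{⊠k}`. Being injective
on cliques, it maps a maximum clique of `Γ_{tk}(G)` onto an independent set of the same size.
-/

namespace SimpleGraph

variable {α β : Type*} {G : SimpleGraph α} {H : SimpleGraph β}

theorem Hom.cliqueNum_le [Finite β] (f : G →g H) : G.cliqueNum ≤ H.cliqueNum := by
  classical
  obtain ⟨s, hs⟩ := G.exists_isNClique_cliqueNum
  have hinj : Set.InjOn f s := fun x hx y hy hxy ↦ by
    by_contra hne
    exact (f.map_adj (hs.isClique hx hy hne)).ne hxy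
  have hclique : H.IsClique (s.image f : Set β) := by
    rw [Finset.coe_image]
    rintro _ ⟨x, hx, rfl⟩ _ ⟨y, hy, rfl⟩ hne
    exact f.map_adj (hs.isClique hx hy (ne_of_apply_ne f hne))
  calc G.cliqueNum = (s.image f).card := by rw [Finset.card_image_of_injOn hinj, hs.card_eq]
    _ ≤ H.cliqueNum := hclique.card_le_cliqueNum

end SimpleGraph

namespace IC

theorem indepNum_eq_indepNum {V : Type*} (U : SimpleGraph V) : indepNum U = U.indepNum := by
  simp only [indepNum, SimpleGraph.indepNum, SimpleGraph.isNIndepSet_iff,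
    SimpleGraph.IsIndepSet, Set.Pairwise, Finset.mem_coe]
  congr! 4 with k
  exact funext fun s ↦ propext and_comm

theorem compl_strongPow_compl_adj {V : Type*} {U : SimpleGraph V} {k : ℕ} {f g : Fin k → V} :
    (strongPow Uᶜ k)ᶜ.Adj f g ↔ ∃ i, U.Adj (f i) (g i) := by
  simp only [SimpleGraph.compl_adj, strongPow]
  constructor
  · rintro ⟨hne, hnot⟩
    push Not at hnot
    obtain ⟨i, hi, hcompl⟩ := hnot hne
    exact ⟨i, by simpa [hi] using hcompl⟩
  · rintro ⟨i, hi⟩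
    refine ⟨fun h ↦ hi.ne (congrFun h i), fun h ↦ ?_⟩
    rcases h.2 i with h | h
    · exact hi.ne h
    · exact h.2 hi

/-- Position `r` of block `m` is bit `t * m + r`. -/
def blockIndex {k t : ℕ} : Fin k × Fin t ≃ Fin (t * k) :=
  finProdFinEquiv.trans (finCongr (Nat.mul_comm k t))

def splitBlocks {n q k : ℕ} {t : Fin n → ℕ} (x : ∀ i, Fin (t i * k) → Fin q) (m : Fin k) :
    ∀ i, Fin (t i) → Fin q :=
  fun i r ↦ x i (blockIndex (m, r))

theorem exists_confusionGraph_adj_splitBlocks {n q k : ℕ} {E : Fin n → Fin n → Prop}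
    {t : Fin n → ℕ} {x z : ∀ i, Fin (t i * k) → Fin q}
    (h : (confusionGraph q E fun i ↦ t i * k).Adj x z) :
    ∃ m, (confusionGraph q E t).Adj (splitBlocks x m) (splitBlocks z m) := by
  obtain ⟨j, l, hne, hside⟩ := h
  obtain ⟨⟨m, r⟩, rfl⟩ := blockIndex.surjective l
  exact ⟨m, j, r, hne, fun i hi ↦ funext fun _ ↦ congrFun (hside i hi) _⟩

def splitBlocksHom (n q k : ℕ) (E : Fin n → Fin n → Prop) (t : Fin n → ℕ) :
    (confusionGraph q E fun i ↦ t i * k) →g (strongPow (confusionGraph q E t)ᶜ k)ᶜ where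
  toFun x := splitBlocks x
  map_rel' h := compl_strongPow_compl_adj.mpr (exists_confusionGraph_adj_splitBlocks h)

end IC

theorem cliqueNum_confusionGraph_le_indepNum_strongPow_general
    (n : ℕ)
    (E : Fin n → Fin n → Prop)
    (t k : ℕ) :
    (IC.confusionGraph 2 E (fun _ : Fin n => t * k)).cliqueNum ≤
      IC.indepNum (IC.strongPow ((IC.confusionGraph 2 E (fun _ : Fin n => t))ᶜ) k) := by
  calc _ ≤ (IC.strongPow (IC.confusionGraph 2 E fun _ ↦ t)ᶜ k)ᶜ.cliqueNum :=
        (IC.splitBlocksHom n 2 k E fun _ ↦ t).cliqueNum_le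
    _ = _ := by rw [SimpleGraph.cliqueNum_compl, IC.indepNum_eq_indepNum]

/-- For integers `t, k ≥ 1`, the clique number of the
confusion graph `Γ_{tk}(G)` is at most the independence number of the `k`-fold
strong product of the complement of `Γ_t(G)`. -/
theorem cliqueNum_confusionGraph_le_indepNum_strongPow
    (n : ℕ) (hn : 1 ≤ n)
    (E : Fin n → Fin n → Prop) (hE : ∀ i, ¬ E i i)
    (t k : ℕ) (ht : 1 ≤ t) (hk : 1 ≤ k) :
    (IC.confusionGraph 2 E (fun _ : Fin n => t * k)).cliqueNum ≤
      IC.indepNum (IC.strongPow ((IC.confusionGraph 2 E (fun _ : Fin n => t))ᶜ) k) :=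
  cliqueNum_confusionGraph_le_indepNum_strongPow_general n E t k
end

section
/- Let G and F be finite simple directed graphs without self-loops, with F on vertex set [m] = {1,…,m}, m ≥ 1, and let t ≥ 1, r ≥ 0 be integers. If there exists a (t, r) index code for the lexicographic product G ∘ F, then ⌊log₂ ω(Γ_t(F))⌋ · β(G) ≤ r. -/
namespace IC

/-- The lexicographic product `G ∘ F` of two directed graphs. -/
def lexProd {V W : Type*} (GE : V → V → Prop) (FE : W → W → Prop) :
    V × W → V × W → Prop :=
  fun x y => GE x.1 y.1 ∨ (x.1 = y.1 ∧ FE x.2 y.2)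

end IC


/-!
A clique of size `2^k` in `Γ_t(F)` is a set of `2^k` blocks of messages for `F`, any two of
which are confusable for some receiver of `F`. Encoding
a `k`-bit message of a node `v` of `G` as one of these blocks, placed on the copy `{v} × [m]`,
turns a `(t, r)` index code for `G ∘ F` into a `(k, r)` index code for `G`: two `G`-messages
that differ at `v` but agree on its side information give blocks that some receiver `(v, j)`
of `G ∘ F` has to distinguish, from identical side information. Take `k = ⌊log₂ ω(Γ_t(F))⌋`.
-/

namespace IC

section Decodable

variable {V : Type*} {E : V → V → Prop} {t : V → ℕ} {r : ℕ}

def IsDecodable (E : V → V → Prop) (φ : (∀ j : V, Fin (t j) → Fin 2) → (Fin r → Fin 2)) :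
    Prop :=
  ∀ (j : V) (x y : ∀ i : V, Fin (t i) → Fin 2), (∀ i, E i j → x i = y i) → φ x = φ y →
    x j = y j

theorem hasCode_iff : HasCode E t r ↔ ∃ φ : (∀ j : V, Fin (t j) → Fin 2) → (Fin r → Fin 2),
    IsDecodable E φ := by
  constructor
  · rintro ⟨φ, ψ, hψ⟩
    refine ⟨φ, fun j x y hside hφ => ?_⟩
    have hrestr : (fun i : {i // E i j} => x i.1) = fun i : {i // E i j} => y i.1 :=
      funext fun i => hside i.1 i.2
    rw [← hψ x j, ← hψ y j, hφ, hrestr]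
  · rintro ⟨φ, hφ⟩
    classical
    refine ⟨φ, fun j c side =>
      if h : ∃ y, φ y = c ∧ ∀ i : {i // E i j}, y i.1 = side i then h.choose j else 0, ?_⟩
    intro x j
    have hx : ∃ y, φ y = φ x ∧ ∀ i : {i // E i j}, y i.1 = x i.1 := ⟨x, rfl, fun _ => rfl⟩
    simp only [dif_pos hx]
    exact hφ j _ x (fun i hi => hx.choose_spec.2 ⟨i, hi⟩) hx.choose_spec.1

end Decodable

theorem IsDecodable.comp_lexProd {V : Type*} {GE : V → V → Prop} {m : ℕ}
    {FE : Fin m → Fin m → Prop} {t : Fin m → ℕ} {r k : ℕ}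
    {φ : (∀ p : V × Fin m, Fin (t p.2) → Fin 2) → (Fin r → Fin 2)}
    (hφ : IsDecodable (lexProd GE FE) φ)
    (c : (⊤ : SimpleGraph (Fin k → Fin 2)) ↪g confusionGraph 2 FE t) :
    IsDecodable (t := fun _ => k) GE fun y => φ fun p => c (y p.1) p.2 := by
  intro v y y' hside hidx
  by_contra hne
  obtain ⟨j, l, hdiff, hsideF⟩ : (confusionGraph 2 FE t).Adj (c (y v)) (c (y' v)) :=
    c.map_adj_iff.mpr hne
  refine hdiff (congrFun (hφ (v, j) _ _ ?_ hidx) l)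
  rintro ⟨u, w⟩ (hG | ⟨rfl, hF⟩)
  · exact congrArg (fun b => c b w) (hside u hG)
  · exact hsideF w hF

theorem natCast_mul_broadcastRate_le {V : Type*} {E : V → V → Prop} {k r : ℕ}
    (h : HasCode E (fun _ => k) r) : (k : ℝ) * broadcastRate E ≤ r := by
  rcases Nat.eq_zero_or_pos k with rfl | hk
  · simp
  have hbdd : BddBelow {ρ : ℝ | ∃ t r : ℕ, 1 ≤ t ∧ HasCode E (fun _ => t) r ∧ ρ = r / t} := by
    refine ⟨0, ?_⟩
    rintro ρ ⟨t, r, -, -, rfl⟩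
    positivity
  have hβ : broadcastRate E ≤ r / k := csInf_le hbdd ⟨k, r, hk, h, rfl⟩
  have hk' : (0 : ℝ) < k := by exact_mod_cast hk
  calc (k : ℝ) * broadcastRate E ≤ k * (r / k) := by gcongr
    _ = r := by field_simp

end IC

namespace SimpleGraph

variable {α β : Type*} {G : SimpleGraph α}

theorem cliqueNum_pos [Fintype α] [Nonempty α] : 0 < G.cliqueNum := by
  obtain ⟨a⟩ := ‹Nonempty α›
  exact Nat.lt_of_lt_of_le (by simp) (IsClique.card_le_cliqueNum (t := {a}) (tc := by simp))

theorem nonempty_completeGraph_embedding_of_card_le_cliqueNum [Fintype β]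
    (h : Fintype.card β ≤ G.cliqueNum) : Nonempty (completeGraph β ↪g G) := by
  obtain ⟨s, hs⟩ := G.exists_isNClique_cliqueNum
  exact ⟨(topEmbeddingOfNotCliqueFree fun hfree => hs.not_cliqueFree (hfree.mono h)).comp
    (Embedding.completeGraph (Fintype.equivFin β).toEmbedding)⟩

end SimpleGraph

theorem floor_log_cliqueNum_mul_broadcastRate_le_general
    {V : Type}
    (GE : V → V → Prop)
    (m : ℕ)
    (FE : Fin m → Fin m → Prop)
    (t r : ℕ)
    (hcode : IC.HasCode (IC.lexProd GE FE) (fun _ => t) r) :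
    (Nat.log 2 ((IC.confusionGraph 2 FE (fun _ : Fin m => t)).cliqueNum) : ℝ) *
        IC.broadcastRate GE ≤ (r : ℝ) := by
  set Γ := IC.confusionGraph 2 FE fun _ : Fin m => t
  set k := Nat.log 2 Γ.cliqueNum
  have hcard : Fintype.card (Fin k → Fin 2) ≤ Γ.cliqueNum := by
    simpa using Nat.pow_log_le_self 2 (SimpleGraph.cliqueNum_pos (G := Γ)).ne'
  obtain ⟨c⟩ := SimpleGraph.nonempty_completeGraph_embedding_of_card_le_cliqueNum hcard
  obtain ⟨φ, hφ⟩ := IC.hasCode_iff.mp hcode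
  exact IC.natCast_mul_broadcastRate_le (IC.hasCode_iff.mpr ⟨_, hφ.comp_lexProd c⟩)

/-- If a `(t, r)` index code exists for the lexicographic
product `G ∘ F` (with `F` on `[m]`), then `⌊log₂ ω(Γ_t(F))⌋ · β(G) ≤ r`. -/
theorem floor_log_cliqueNum_mul_broadcastRate_le
    {V : Type} [Fintype V]
    (GE : V → V → Prop) (hG : ∀ v, ¬ GE v v)
    (m : ℕ) (hm : 1 ≤ m)
    (FE : Fin m → Fin m → Prop) (hF : ∀ i, ¬ FE i i)
    (t r : ℕ) (ht : 1 ≤ t)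
    (hcode : IC.HasCode (IC.lexProd GE FE) (fun _ => t) r) :
    (Nat.log 2 ((IC.confusionGraph 2 FE (fun _ : Fin m => t)).cliqueNum) : ℝ) *
        IC.broadcastRate GE ≤ (r : ℝ) :=
  floor_log_cliqueNum_mul_broadcastRate_le_general GE m FE t r hcode
end

section
/- Let G be a finite simple directed graph without self-loops on vertex set [m] = {1,…,m}, and let F_1,…,F_m be finite simple directed graphs without self-loops on nonempty finite vertex sets such that β(F_1) ≤ β(F_2) ≤ ⋯ ≤ β(F_m). Then the broadcast rate of the generalized lexicographic product satisfies β(G ∘ (F_1,…,F_m)) ≤ β(F_1)·β(G) + Σ_{i=1}^{m−1} (β(F_{i+1}) − β(F_i)) · β(G|_{{i+1,…,m}}), where G|_{{i+1,…,m}} denotes the subgraph of G induced by the vertices {i+1,…,m}. -/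
namespace IC

/-- The generalized lexicographic product `G ∘ (F_1, …, F_m)`: vertex `i` of `G`
(on `[m]`, 0-indexed) is replaced by the graph `F i` (on `Vf i`), edges inside
each copy are those of `F i`, and there is an edge from every vertex of the
`i`-th copy to every vertex of the `j`-th copy (`i ≠ j`) iff `(i, j) ∈ E(G)`. -/
def glexProd (m : ℕ) (GE : Fin m → Fin m → Prop)
    (Vf : ℕ → Type) (FE : ∀ i : ℕ, Vf i → Vf i → Prop) :
    (Σ i : Fin m, Vf i.val) → (Σ i : Fin m, Vf i.val) → Prop :=
  fun x y => (x.1 ≠ y.1 ∧ GE x.1 y.1) ∨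
    ∃ h : x.1 = y.1,
      FE x.1.val x.2 (cast (congrArg (fun i : Fin m => Vf i.val) h.symm) y.2)

end IC

/-!
Fix a message length `d`. Block `i` is encoded by an index code for `F i` of index length
`f i ≈ β(F i) d`; taking for `f` the running maximum of near-optimal index lengths makes it
monotone without spoiling this, since the `β(F i)` are monotone. The inner indices are then sent
by an index code for `G` in which vertex `i` carries `f i` bits: a receiver in block `j` knows the
messages, hence the inner indices, of the blocks `i` with `(i, j) ∈ G`. As `f` is monotone, that
outer message splits into layers: `f 0` bits at every vertex, and `f (i + 1) - f i` bits at every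
vertex `j > i`, sent by a code for the subgraph induced on `{j > i}`. The total is
`β(G) β(F 0) d + Σ β(G|_{j > i}) (β(F (i + 1)) - β(F i)) d` up to `O(ε d)` and a constant, which
disappear in the limits `d → ∞` and `ε → 0`.
-/

namespace IC

section

variable {V : Type*} {E : V → V → Prop}

theorem HasCode.mono_index {t : V → ℕ} {r r' : ℕ} (h : HasCode E t r) (hr : r ≤ r') :
    HasCode E t r' := by
  obtain ⟨φ, ψ, hc⟩ := h
  exact ⟨fun x k => if hk : (k : ℕ) < r then φ x ⟨k, hk⟩ else 0,
    fun j c => ψ j fun k => c (Fin.castLE hr k), fun x j => by simpa using hc x j⟩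

theorem HasCode.anti_length {t t' : V → ℕ} {r : ℕ} (h : HasCode E t r) (ht : t' ≤ t) :
    HasCode E t' r := by
  obtain ⟨φ, ψ, hc⟩ := h
  let pad : ∀ j, (Fin (t' j) → Fin 2) → Fin (t j) → Fin 2 :=
    fun j y k => if hk : (k : ℕ) < t' j then y ⟨k, hk⟩ else 0
  refine ⟨fun x => φ fun j => pad j (x j),
    fun j c s k => ψ j c (fun i => pad i (s i)) (Fin.castLE (ht j) k), fun x j => ?_⟩
  funext k
  simp [hc, pad]

theorem HasCode.add {t₁ t₂ : V → ℕ} {r₁ r₂ : ℕ} (h₁ : HasCode E t₁ r₁)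
    (h₂ : HasCode E t₂ r₂) : HasCode E (t₁ + t₂) (r₁ + r₂) := by
  obtain ⟨φ₁, ψ₁, hc₁⟩ := h₁
  obtain ⟨φ₂, ψ₂, hc₂⟩ := h₂
  let left : ∀ j, (Fin (t₁ j + t₂ j) → Fin 2) → Fin (t₁ j) → Fin 2 :=
    fun _ y k => y (Fin.castAdd _ k)
  let right : ∀ j, (Fin (t₁ j + t₂ j) → Fin 2) → Fin (t₂ j) → Fin 2 :=
    fun _ y k => y (Fin.natAdd _ k)
  refine ⟨fun x => Fin.append (φ₁ fun j => left j (x j)) (φ₂ fun j => right j (x j)),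
    fun j c s => Fin.append
      (ψ₁ j (fun k => c (Fin.castAdd _ k)) fun i => left i (s i))
      (ψ₂ j (fun k => c (Fin.natAdd _ k)) fun i => right i (s i)),
    fun x j => ?_⟩
  simp only [Fin.append_left, Fin.append_right]
  rw [hc₁, hc₂]
  exact Fin.append_castAdd_natAdd

theorem hasCode_zero : HasCode E 0 0 :=
  ⟨fun _ => Fin.elim0, fun _ _ _ k => k.elim0, fun _ _ => funext fun k => k.elim0⟩

theorem hasCode_sum {ι : Type*} (s : Finset ι) {t : ι → V → ℕ} {r : ι → ℕ}
    (h : ∀ i ∈ s, HasCode E (t i) (r i)) : HasCode E (∑ i ∈ s, t i) (∑ i ∈ s, r i) := by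
  classical
  induction s using Finset.induction_on with
  | empty => simpa using hasCode_zero
  | insert a s ha ih =>
    rw [Finset.sum_insert ha, Finset.sum_insert ha]
    exact (h a (s.mem_insert_self a)).add (ih fun i hi => h i (Finset.mem_insert_of_mem hi))

theorem HasCode.nsmul {t : V → ℕ} {r : ℕ} (h : HasCode E t r) (k : ℕ) :
    HasCode E (k • t) (k * r) := by
  simpa using hasCode_sum (Finset.range k) fun _ _ => h

theorem HasCode.of_blocks {s r : ℕ} (hs : 0 < s) (h : HasCode E (fun _ => s) r) (d : ℕ) :
    HasCode E (fun _ => d) ((d / s + 1) * r) :=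
  (h.nsmul (d / s + 1)).anti_length fun _ => by
    simpa [add_mul] using (Nat.lt_div_mul_add (a := d) hs).le

theorem hasCode_card [Fintype V] (d : ℕ) : HasCode E (fun _ => d) (Fintype.card V * d) := by
  let e : V × Fin d ≃ Fin (Fintype.card V * d) :=
    (Equiv.prodCongr (Fintype.equivFin V) (Equiv.refl _)).trans finProdFinEquiv
  exact ⟨fun x k => x (e.symm k).1 (e.symm k).2, fun j c _ a => c (e (j, a)),
    fun x j => funext fun a => by dsimp only; rw [e.symm_apply_apply]⟩

def induce (E : V → V → Prop) (P : V → Prop) : Subtype P → Subtype P → Prop :=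
  fun a b => E a.1 b.1

theorem HasCode.of_induce {P : V → Prop} [DecidablePred P] {d r : ℕ}
    (h : HasCode (induce E P) (fun _ => d) r) :
    HasCode E (fun j => if P j then d else 0) r := by
  obtain ⟨φ, ψ, hc⟩ := h
  let restr : ∀ j : Subtype P, (Fin (if P j then d else 0) → Fin 2) → Fin d → Fin 2 :=
    fun j y k => y (Fin.cast (if_pos j.2).symm k)
  refine ⟨fun x => φ fun j => restr j (x j),
    fun j c s => if hj : P j then
      fun k => ψ ⟨j, hj⟩ c (fun i => restr ⟨i.1, i.1.2⟩ (s ⟨i.1.1, i.2⟩)) (Fin.cast (if_pos hj) k)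
    else fun _ => 0,
    fun x j => ?_⟩
  by_cases hj : P j
  · funext k
    simp only [hj, dif_pos]
    rw [hc]
    simp [restr]
  · funext k
    exact absurd k.isLt (by simp [hj])

theorem broadcastRate_nonneg : 0 ≤ broadcastRate E :=
  Real.sInf_nonneg <| by rintro _ ⟨t, r, -, -, rfl⟩; positivity

theorem broadcastRate_le_div {t r : ℕ} (ht : 0 < t) (h : HasCode E (fun _ => t) r) :
    broadcastRate E ≤ r / t :=
  csInf_le ⟨0, by rintro _ ⟨t, r, -, -, rfl⟩; positivity⟩ ⟨t, r, ht, h, rfl⟩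

theorem broadcastRate_mul_le {t r : ℕ} (ht : 0 < t) (h : HasCode E (fun _ => t) r) :
    broadcastRate E * t ≤ r :=
  (le_div_iff₀ (by exact_mod_cast ht)).1 (broadcastRate_le_div ht h)

theorem exists_hasCode_div_lt [Fintype V] {ε : ℝ} (hε : 0 < ε) :
    ∃ t r : ℕ, 0 < t ∧ HasCode E (fun _ => t) r ∧ (r : ℝ) / t < broadcastRate E + ε := by
  have hne : {ρ : ℝ | ∃ t r : ℕ, 1 ≤ t ∧ HasCode E (fun _ => t) r ∧ ρ = r / t}.Nonempty :=
    ⟨_, 1, _, le_rfl, hasCode_card 1, rfl⟩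
  obtain ⟨_, ⟨t, r, ht, h, rfl⟩, hlt⟩ := Real.lt_sInf_add_pos hne hε
  exact ⟨t, r, ht, h, hlt⟩

theorem exists_hasCode_le [Fintype V] {ε : ℝ} (hε : 0 < ε) :
    ∃ C : ℕ, ∀ d : ℕ, ∃ r, HasCode E (fun _ => d) r ∧
      (r : ℝ) ≤ (broadcastRate E + ε) * d + C := by
  obtain ⟨s, q, hs, hq, hlt⟩ := exists_hasCode_div_lt (E := E) hε
  refine ⟨q, fun d => ⟨_, hq.of_blocks hs d, ?_⟩⟩
  have hs' : (0 : ℝ) < s := by exact_mod_cast hs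
  calc (((d / s + 1) * q : ℕ) : ℝ) ≤ ((d : ℝ) / s + 1) * q := by
        push_cast; gcongr; exact Nat.cast_div_le
    _ = q / s * d + q := by field_simp
    _ ≤ (broadcastRate E + ε) * d + q := by gcongr

theorem broadcastRate_le_of_hasCode_le {ρ C : ℝ}
    (h : ∀ d : ℕ, 0 < d → ∃ r, HasCode E (fun _ => d) r ∧ (r : ℝ) ≤ ρ * d + C) :
    broadcastRate E ≤ ρ := by
  have hlim : Filter.Tendsto (fun d : ℕ => ρ + C / d) Filter.atTop (nhds ρ) := by
    simpa using tendsto_const_nhds.add (tendsto_const_div_atTop_nhds_zero_nat C)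
  refine ge_of_tendsto hlim ?_
  filter_upwards [Filter.eventually_gt_atTop 0] with d hd
  obtain ⟨r, hr, hle⟩ := h d hd
  have hd' : (0 : ℝ) < d := by exact_mod_cast hd
  calc broadcastRate E ≤ r / d := broadcastRate_le_div hd hr
    _ ≤ (ρ * d + C) / d := by gcongr
    _ = ρ + C / d := by field_simp

end

theorem hasCode_glexProd {m : ℕ} {GE : Fin m → Fin m → Prop} (hG : ∀ i, ¬ GE i i)
    {Vf : ℕ → Type} {FE : ∀ i : ℕ, Vf i → Vf i → Prop} {t R : ℕ} {r : Fin m → ℕ}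
    (hin : ∀ i : Fin m, HasCode (FE i) (fun _ => t) (r i)) (hout : HasCode GE r R) :
    HasCode (glexProd m GE Vf FE) (fun _ => t) R := by
  choose φ ψ hc using hin
  obtain ⟨Φ, Ψ, hC⟩ := hout
  have hne {a b : Fin m} (hab : GE a b) : a ≠ b := by
    rintro rfl; exact hG a hab
  refine ⟨fun x => Φ fun i => φ i fun v => x ⟨i, v⟩,
    fun p c s => ψ p.1 p.2
      (Ψ p.1 c fun i => φ i.1 fun v => s ⟨⟨i.1, v⟩, Or.inl ⟨hne i.2, i.2⟩⟩)
      (fun v => s ⟨⟨p.1, v.1⟩, Or.inr ⟨rfl, v.2⟩⟩),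
    fun x ⟨j, w⟩ => ?_⟩
  dsimp only
  rw [hC]
  exact hc j (fun v => x ⟨j, v⟩) w

theorem hasCode_of_layers {m : ℕ} {GE : Fin m → Fin m → Prop} {f : ℕ → ℕ} (hf : Monotone f)
    {r₀ : ℕ} {r : ℕ → ℕ} (h₀ : HasCode GE (fun _ => f 0) r₀)
    (h : ∀ i < m - 1, HasCode (induce GE fun j => i < (j : ℕ)) (fun _ => f (i + 1) - f i) (r i)) :
    HasCode GE (fun j => f j) (r₀ + ∑ i ∈ Finset.range (m - 1), r i) := by
  have hsum := hasCode_sum (Finset.range (m - 1))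
    fun i hi => (h i (Finset.mem_range.1 hi)).of_induce
  convert h₀.add hsum using 1
  funext j
  simp only [Pi.add_apply, Finset.sum_apply]
  rw [Finset.sum_ite, Finset.sum_const_zero, add_zero]
  have hj : (Finset.range (m - 1)).filter (· < (j : ℕ)) = Finset.range j := by
    ext i; simp only [Finset.mem_filter, Finset.mem_range]; omega
  rw [hj, Finset.sum_range_tsub hf]
  have := hf (Nat.zero_le (j : ℕ))
  omega

theorem exists_hasCode_layered_le {m : ℕ} (GE : Fin m → Fin m → Prop) {ε : ℝ} (hε : 0 < ε) :
    ∃ C : ℕ, ∀ f : ℕ → ℕ, Monotone f → ∃ R, HasCode GE (fun j => f j) R ∧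
      (R : ℝ) ≤ (broadcastRate GE + ε) * f 0 +
        ∑ i ∈ Finset.range (m - 1),
          (broadcastRate (induce GE fun j => i < (j : ℕ)) + ε) * ((f (i + 1) : ℝ) - f i) + C := by
  obtain ⟨C₀, h₀⟩ := exists_hasCode_le (E := GE) hε
  choose C hC using fun i => exists_hasCode_le (E := induce GE fun j : Fin m => i < (j : ℕ)) hε
  refine ⟨C₀ + ∑ i ∈ Finset.range (m - 1), C i, fun f hf => ?_⟩
  obtain ⟨r₀, hr₀, hle₀⟩ := h₀ (f 0)
  choose r hr hle using fun i => hC i (f (i + 1) - f i)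
  refine ⟨_, hasCode_of_layers hf hr₀ fun i _ => hr i, ?_⟩
  have hle' (i : ℕ) : (r i : ℝ) ≤ (broadcastRate (induce GE fun j : Fin m => i < (j : ℕ)) + ε) *
      ((f (i + 1) : ℝ) - f i) + C i := by
    simpa [Nat.cast_sub (hf i.le_succ)] using hle i
  push_cast
  calc (r₀ : ℝ) + ∑ i ∈ Finset.range (m - 1), (r i : ℝ)
      ≤ (broadcastRate GE + ε) * f 0 + C₀ + ∑ i ∈ Finset.range (m - 1),
          ((broadcastRate (induce GE fun j : Fin m => i < (j : ℕ)) + ε) *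
            ((f (i + 1) : ℝ) - f i) + C i) := by
        gcongr with i
        exact hle' i
    _ = _ := by rw [Finset.sum_add_distrib]; ring

theorem exists_monotone_hasCode_family_le {Vf : ℕ → Type} [∀ i, Fintype (Vf i)]
    {FE : ∀ i : ℕ, Vf i → Vf i → Prop} {m : ℕ}
    (hmono : ∀ i j : ℕ, i ≤ j → j < m → broadcastRate (FE i) ≤ broadcastRate (FE j))
    {ε : ℝ} (hε : 0 < ε) :
    ∃ C : ℝ, ∀ d : ℕ, ∃ f : ℕ →o ℕ, (∀ i, HasCode (FE i) (fun _ => d) (f i)) ∧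
      (f 0 : ℝ) ≤ (broadcastRate (FE 0) + ε) * d + C ∧
      ∀ i < m, (f i : ℝ) ≤ (broadcastRate (FE i) + ε) * d + C := by
  choose C hC using fun i => exists_hasCode_le (E := FE i) hε
  have hC_le {j : ℕ} (hj : j < m + 1) : (C j : ℝ) ≤ ∑ k ∈ Finset.range (m + 1), (C k : ℝ) :=
    Finset.single_le_sum (fun k _ => (C k).cast_nonneg) (Finset.mem_range.2 hj)
  refine ⟨∑ k ∈ Finset.range (m + 1), (C k : ℝ), fun d => ?_⟩
  choose r hr hle using fun i => hC i d
  refine ⟨partialSups r, fun i => (hr i).mono_index (le_partialSups r i), ?_, fun i hi => ?_⟩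
  · rw [partialSups_zero]
    exact (hle 0).trans (by gcongr; exact hC_le m.succ_pos)
  · obtain ⟨j, hji, hj⟩ := exists_partialSups_eq r i
    rw [hj]
    refine (hle j).trans ?_
    gcongr
    · exact hmono j i hji hi
    · exact hC_le (by omega)

theorem broadcastRate_glexProd_le_of_pos {m : ℕ} {GE : Fin m → Fin m → Prop}
    (hG : ∀ i, ¬ GE i i) {Vf : ℕ → Type} [∀ i, Fintype (Vf i)]
    {FE : ∀ i : ℕ, Vf i → Vf i → Prop}
    (hmono : ∀ i j : ℕ, i ≤ j → j < m → broadcastRate (FE i) ≤ broadcastRate (FE j))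
    {ε : ℝ} (hε : 0 < ε) :
    broadcastRate (glexProd m GE Vf FE) ≤
      (broadcastRate (FE 0) + ε) * (broadcastRate GE + ε) +
      ∑ i ∈ Finset.range (m - 1),
        (broadcastRate (FE (i + 1)) - broadcastRate (FE i) + ε) *
          (broadcastRate (induce GE fun j => i < (j : ℕ)) + ε) := by
  obtain ⟨CG, hCG⟩ := exists_hasCode_layered_le GE hε
  obtain ⟨CF, hCF⟩ := exists_monotone_hasCode_family_le hmono hε
  refine broadcastRate_le_of_hasCode_le (C := (broadcastRate GE + ε) * CF +
    ∑ i ∈ Finset.range (m - 1), (broadcastRate (induce GE fun j => i < (j : ℕ)) + ε) * CF + CG)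
    fun d hd => ?_
  obtain ⟨f, hf_code, hf_zero, hf_le⟩ := hCF d
  obtain ⟨R, hR, hRle⟩ := hCG f f.monotone
  refine ⟨R, hasCode_glexProd hG (fun i => hf_code i) hR, hRle.trans ?_⟩
  have hGε : 0 ≤ broadcastRate GE + ε := by linarith [broadcastRate_nonneg (E := GE)]
  have hsum (u v : ℕ → ℝ) : ∑ i ∈ Finset.range (m - 1), u i * (v i * d + CF) =
      (∑ i ∈ Finset.range (m - 1), v i * u i) * d + ∑ i ∈ Finset.range (m - 1), u i * CF := by
    rw [Finset.sum_mul, ← Finset.sum_add_distrib]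
    exact Finset.sum_congr rfl fun i _ => by ring
  calc (broadcastRate GE + ε) * f 0 + ∑ i ∈ Finset.range (m - 1),
        (broadcastRate (induce GE fun j => i < (j : ℕ)) + ε) * ((f (i + 1) : ℝ) - f i) + CG
      ≤ (broadcastRate GE + ε) * ((broadcastRate (FE 0) + ε) * d + CF) +
        ∑ i ∈ Finset.range (m - 1), (broadcastRate (induce GE fun j => i < (j : ℕ)) + ε) *
          ((broadcastRate (FE (i + 1)) - broadcastRate (FE i) + ε) * d + CF) + CG := by
        gcongr with i hi
        · linarith [broadcastRate_nonneg (E := induce GE fun j : Fin m => i < (j : ℕ))]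
        · linarith [hf_le (i + 1) (by simp at hi; omega), broadcastRate_mul_le hd (hf_code i)]
    _ = _ := by
        simp only [hsum]
        ring

end IC

theorem broadcastRate_glexProd_le_general
    (m : ℕ)
    (GE : Fin m → Fin m → Prop) (hG : ∀ i, ¬ GE i i)
    (Vf : ℕ → Type) [∀ i, Fintype (Vf i)]
    (FE : ∀ i : ℕ, Vf i → Vf i → Prop)
    (hmono : ∀ i j : ℕ, i ≤ j → j < m →
      IC.broadcastRate (FE i) ≤ IC.broadcastRate (FE j)) :
    IC.broadcastRate (IC.glexProd m GE Vf FE) ≤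
      IC.broadcastRate (FE 0) * IC.broadcastRate GE +
      ∑ i ∈ Finset.range (m - 1),
        (IC.broadcastRate (FE (i + 1)) - IC.broadcastRate (FE i)) *
          IC.broadcastRate (fun a b : {j : Fin m // i < (j : ℕ)} => GE a.1 b.1) := by
  set g : ℝ → ℝ := fun ε => (IC.broadcastRate (FE 0) + ε) * (IC.broadcastRate GE + ε) +
    ∑ i ∈ Finset.range (m - 1),
      (IC.broadcastRate (FE (i + 1)) - IC.broadcastRate (FE i) + ε) *
        (IC.broadcastRate (IC.induce GE fun j => i < (j : ℕ)) + ε)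
  have hg : Filter.Tendsto g (nhdsWithin 0 (Set.Ioi 0)) (nhds (g 0)) :=
    ((by fun_prop : Continuous g).tendsto 0).mono_left nhdsWithin_le_nhds
  calc IC.broadcastRate (IC.glexProd m GE Vf FE) ≤ g 0 :=
        ge_of_tendsto hg (eventually_nhdsWithin_of_forall fun ε hε =>
          IC.broadcastRate_glexProd_le_of_pos hG hmono hε)
    _ = _ := by simp only [g, add_zero]; rfl

/-- Upper bound on the broadcast rate of a generalized
lexicographic product: if `β(F_1) ≤ ⋯ ≤ β(F_m)` (here 0-indexed: `F 0, …,
F (m−1)`), then `β(G ∘ (F_1, …, F_m)) ≤ β(F_1)β(G) +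
Σ_{i=1}^{m−1} (β(F_{i+1}) − β(F_i)) β(G|_{{i+1,…,m}})`. -/
theorem broadcastRate_glexProd_le
    (m : ℕ) (hm : 1 ≤ m)
    (GE : Fin m → Fin m → Prop) (hG : ∀ i, ¬ GE i i)
    (Vf : ℕ → Type) [∀ i, Fintype (Vf i)] [∀ i, Nonempty (Vf i)]
    (FE : ∀ i : ℕ, Vf i → Vf i → Prop) (hF : ∀ i v, ¬ FE i v v)
    (hmono : ∀ i j : ℕ, i ≤ j → j < m →
      IC.broadcastRate (FE i) ≤ IC.broadcastRate (FE j)) :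
    IC.broadcastRate (IC.glexProd m GE Vf FE) ≤
      IC.broadcastRate (FE 0) * IC.broadcastRate GE +
      ∑ i ∈ Finset.range (m - 1),
        (IC.broadcastRate (FE (i + 1)) - IC.broadcastRate (FE i)) *
          IC.broadcastRate (fun a b : {j : Fin m // i < (j : ℕ)} => GE a.1 b.1) :=
  broadcastRate_glexProd_le_general m GE hG Vf FE hmono
end

section
/- Let G be an index coding instance on n ≥ 1 messages. If every edge of G belongs to a vertex-induced subgraph of G that is a unicycle, then G is critical: for every edge e of G, the capacity region of G with e removed differs from the capacity region of G, i.e., 𝒞(G_e) ≠ 𝒞(G). -/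
namespace IC

/-- A rate tuple `R` is achievable: it is nonnegative and there is a
`(t_1, …, t_n, r)` index code with `R j ≤ t j / r` for all `j`. -/
def Achievable {n : ℕ} (E : Fin n → Fin n → Prop) (R : Fin n → ℝ) : Prop :=
  (∀ j, 0 ≤ R j) ∧
  ∃ (t : Fin n → ℕ) (r : ℕ), (∀ j, 1 ≤ t j) ∧ 1 ≤ r ∧ HasCode E t r ∧
    ∀ j, R j ≤ (t j : ℝ) / r

/-- The capacity region `𝒞(G)`: the closure of the set of achievable rate tuples. -/
noncomputable def capacityRegion {n : ℕ} (E : Fin n → Fin n → Prop) : Set (Fin n → ℝ) :=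
  closure {R | Achievable E R}

end IC
namespace IC

/-- The graph obtained by removing the edge `(a, b)`. -/
def removeEdge {V : Type*} (E : V → V → Prop) (a b : V) : V → V → Prop :=
  fun x y => E x y ∧ ¬(x = a ∧ y = b)

/-- The subgraph induced on `S` contains a directed cycle. -/
def HasCycleIn {V : Type*} (E : V → V → Prop) (S : Set V) : Prop :=
  ∃ (m : ℕ) (v : Fin (m + 2) → V), Function.Injective v ∧ (∀ i, v i ∈ S) ∧
    ∀ i, E (v i) (v (i + 1))

/-- The MAIS outer bound region `ℛ_MAIS(G)`. -/
def maisRegion {n : ℕ} (E : Fin n → Fin n → Prop) : Set (Fin n → ℝ) :=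
  {R | (∀ j, 0 ≤ R j) ∧
    ∀ S : Finset (Fin n), ¬ HasCycleIn E ↑S → ∑ j ∈ S, R j ≤ 1}

/-- The subgraph induced on `S` is a unicycle: `|S| ≥ 2` and `S` admits an
enumeration `v_0, …, v_{m−1}` such that the edges of the induced subgraph are
exactly the directed Hamiltonian cycle `v_0 → v_1 → ⋯ → v_{m−1} → v_0`. -/
def IsUnicycle {V : Type*} (E : V → V → Prop) (S : Set V) : Prop :=
  ∃ (m : ℕ) (v : Fin (m + 2) → V), Function.Injective v ∧ Set.range v = S ∧
    ∀ a b, a ∈ S → b ∈ S → (E a b ↔ ∃ i, v i = a ∧ v (i + 1) = b)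

/-- The edge `(x, y)` belongs to a unicycle of the graph. -/
def InUnicycle {V : Type*} (E : V → V → Prop) (x y : V) : Prop :=
  E x y ∧ ∃ S : Set V, IsUnicycle E S ∧ x ∈ S ∧ y ∈ S

end IC

/-!
Let `S` be a unicycle of `G` through the edge `e`, with `|S| = m + 2`. In `G`, broadcasting the
`m + 1` differences (XORs) of consecutive cycle messages (`k` bits each) and the `c` remaining
messages uncoded (one bit each) is an index code of length `(m + 1) k + c` carrying `(m + 2) k`
bits on `S`, which exceeds the length once `k > c`. In `G_e` the subgraph induced on `S` is
acyclic, so every code has length at least the number of bits on `S`; by closedness this bound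
passes to `𝒞(G_e)`, and the normalized rate tuple of the cycle code separates the two regions.
-/

open Finset

theorem Fin.eq_of_succ_sub_castSucc_eq {A : Type*} [AddCommGroup A] {m : ℕ} {a a' : Fin (m + 1) → A}
    (hdiff : ∀ l : Fin m, a l.succ - a l.castSucc = a' l.succ - a' l.castSucc)
    (l : Fin (m + 1)) (hl : a l = a' l) : a = a' := by
  have hconst : ∀ i, a i - a' i = a 0 - a' 0 := fun i => by
    induction i using Fin.induction with
    | zero => rfl
    | succ i ih => rw [← ih, sub_eq_sub_iff_sub_eq_sub, ← hdiff i]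
  funext i
  rw [← sub_eq_zero, hconst, ← hconst l, hl, sub_self]

namespace IC

section Codes

variable {V : Type*} {E : V → V → Prop} {t : V → ℕ} {r : ℕ}

theorem hasCode_of_encoder {α : Type*} [Fintype α] (hα : Fintype.card α ≤ 2 ^ r)
    (φ : (∀ j, Fin (t j) → Fin 2) → α)
    (hφ : ∀ j x x', φ x = φ x' → (∀ i, E i j → x i = x' i) → x j = x' j) :
    HasCode E t r := by
  classical
  obtain ⟨e⟩ := Function.Embedding.nonempty_of_card_le (β := Fin r → Fin 2) (by simpa using hα)
  refine ⟨e ∘ φ, fun j idx side =>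
    if h : ∃ x, e (φ x) = idx ∧ ∀ i : {i // E i j}, x i.1 = side i then h.choose j
    else fun _ => 0, fun x j => ?_⟩
  have hx : ∃ x', e (φ x') = e (φ x) ∧ ∀ i : {i // E i j}, x' i.1 = x i.1 :=
    ⟨x, rfl, fun _ => rfl⟩
  simp only [Function.comp_apply, dif_pos hx]
  exact hφ j _ x (e.injective hx.choose_spec.1) fun i hi => hx.choose_spec.2 ⟨i, hi⟩

/-- Acyclic bound: along a well-founded order, each message on `S` is decoded from the index
and from messages decoded earlier, so the index determines all messages on `S`. -/
theorem sum_le_of_hasCode_of_wellFounded (S : Finset V)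
    (hwf : WellFounded fun a b => E a b ∧ a ∈ S ∧ b ∈ S) (hc : HasCode E t r) :
    ∑ j ∈ S, t j ≤ r := by
  classical
  obtain ⟨φ, ψ, hψ⟩ := hc
  let extend (u : ∀ j : S, Fin (t j) → Fin 2) (j : V) : Fin (t j) → Fin 2 :=
    if h : j ∈ S then u ⟨j, h⟩ else fun _ => 0
  have hinj : Function.Injective fun u => φ (extend u) := by
    intro u u' (huu : φ (extend u) = φ (extend u'))
    have key : ∀ j, extend u j = extend u' j := by
      intro j
      induction j using hwf.induction with | _ j ih => ?_
      by_cases hj : j ∈ S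
      · rw [← hψ (extend u) j, ← hψ (extend u') j, huu]
        congr 1
        funext i
        by_cases hi : i.1 ∈ S
        · exact ih i.1 ⟨i.2, hi, hj⟩
        · simp [extend, hi]
      · simp [extend, hj]
    funext j
    simpa [extend] using key j
  have hcard := Fintype.card_le_of_injective _ hinj
  simp only [Fintype.card_pi, Fintype.card_fin, prod_const, card_univ, prod_pow_eq_pow_sum,
    sum_coe_sort S t] at hcard
  exact (Nat.pow_le_pow_iff_right (by norm_num)).mp hcard

end Codes

theorem sum_le_one_of_mem_capacityRegion {n : ℕ} {E : Fin n → Fin n → Prop} (S : Finset (Fin n))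
    (hS : ∀ t r, HasCode E t r → ∑ j ∈ S, t j ≤ r) {R : Fin n → ℝ}
    (hR : R ∈ capacityRegion E) : ∑ j ∈ S, R j ≤ 1 := by
  have hclosed : IsClosed {R : Fin n → ℝ | ∑ j ∈ S, R j ≤ 1} :=
    isClosed_le (continuous_finsetSum _ fun j _ => continuous_apply j) continuous_const
  refine closure_minimal ?_ hclosed hR
  rintro R ⟨-, t, r, -, hr, hc, hle⟩
  have hr : (0 : ℝ) < r := by exact_mod_cast hr
  calc ∑ j ∈ S, R j ≤ ∑ j ∈ S, (t j : ℝ) / r := sum_le_sum fun j _ => hle j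
    _ = (∑ j ∈ S, t j : ℕ) / r := by rw [← sum_div, Nat.cast_sum]
    _ ≤ 1 := (div_le_one hr).2 (by exact_mod_cast hS t r hc)

theorem capacityRegion_ne_of_hasCode {n : ℕ} {E E' : Fin n → Fin n → Prop} (S : Finset (Fin n))
    (hE' : ∀ t r, HasCode E' t r → ∑ j ∈ S, t j ≤ r) {t : Fin n → ℕ} {r : ℕ}
    (ht : ∀ j, 1 ≤ t j) (hr : 1 ≤ r) (hc : HasCode E t r) (hlt : r < ∑ j ∈ S, t j) :
    capacityRegion E' ≠ capacityRegion E := by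
  intro heq
  have hR : (fun j => (t j : ℝ) / r) ∈ capacityRegion E' :=
    heq ▸ subset_closure ⟨fun j => by positivity, t, r, ht, hr, hc, fun j => le_rfl⟩
  have hr : (0 : ℝ) < r := by exact_mod_cast hr
  have hsum := sum_le_one_of_mem_capacityRegion S hE' hR
  rw [← sum_div, div_le_one hr] at hsum
  exact absurd hsum (by exact_mod_cast hlt.not_ge)

section Cycle

variable {V : Type*} {E : V → V → Prop} {m : ℕ} {v : Fin (m + 2) → V}

/-- Each cycle node knows its predecessor's message, which together with the broadcast
differences determines its own. -/
theorem hasCode_cycle [Fintype V] [DecidableEq V] (hcyc : ∀ i, E (v i) (v (i + 1))) (k : ℕ) :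
    HasCode E (fun j => if j ∈ univ.image v then k else 1)
      ((m + 1) * k + Fintype.card {j // j ∉ univ.image v}) := by
  set S := univ.image v
  set t : V → ℕ := fun j => if j ∈ S then k else 1
  have htk : ∀ i, t (v i) = k := fun i => if_pos (mem_image_of_mem v (mem_univ i))
  let a (x : ∀ j, Fin (t j) → Fin 2) (i : Fin (m + 2)) : Fin k → Fin 2 :=
    fun b => x (v i) (Fin.cast (htk i).symm b)
  refine hasCode_of_encoder
    (α := (Fin (m + 1) → Fin k → Fin 2) × (∀ j : {j // j ∉ S}, Fin (t j) → Fin 2))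
    ?_ (fun x => (fun l => a x l.succ - a x l.castSucc, fun j => x j)) ?_
  · have ht1 : ∀ j : {j // j ∉ S}, t j = 1 := fun j => if_neg j.2
    simp [Fintype.card_pi, ht1, pow_add, pow_mul, mul_comm]
  · intro j x x' hφ hside
    simp only [Prod.mk.injEq] at hφ
    by_cases hj : j ∈ S
    · obtain ⟨i, -, rfl⟩ := mem_image.1 hj
      have hprev : E (v (i - 1)) (v i) := by simpa using hcyc (i - 1)
      have ha : a x = a x' := Fin.eq_of_succ_sub_castSucc_eq (congrFun hφ.1) (i - 1)
        (funext fun b => congrFun (hside _ hprev) _)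
      funext b
      simpa [a] using congrFun (congrFun ha i) (Fin.cast (htk i) b)
    · exact congrFun hφ.2 ⟨j, hj⟩

theorem exists_hasCode_lt_sum_cycle [Fintype V] [DecidableEq V] (hv : Function.Injective v)
    (hcyc : ∀ i, E (v i) (v (i + 1))) :
    ∃ t r, (∀ j, 1 ≤ t j) ∧ 1 ≤ r ∧ HasCode E t r ∧ r < ∑ j ∈ univ.image v, t j := by
  set c := Fintype.card {j // j ∉ univ.image v}
  refine ⟨_, _, fun j => ?_, ?_, hasCode_cycle hcyc (c + 1), ?_⟩
  · split_ifs <;> omega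
  · nlinarith
  · rw [sum_congr rfl fun j hj => if_pos hj, sum_const, card_image_of_injective _ hv,
      card_univ, Fintype.card_fin, smul_eq_mul]
    nlinarith

/-- Ranking the cycle's vertices by their distance from the head `v (i + 1)` of the removed edge,
every remaining edge goes up by one. -/
theorem wellFounded_removeEdge_cycle [DecidableEq V] (hv : Function.Injective v)
    (hE : ∀ i j, E (v i) (v j) → j = i + 1) (i : Fin (m + 2)) :
    WellFounded fun a b => removeEdge E (v i) (v (i + 1)) a b ∧ a ∈ univ.image v ∧
      b ∈ univ.image v := by
  refine Subrelation.wf (r := InvImage (· < ·) fun a => (Function.invFun v a - (i + 1)).val)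
    ?_ (InvImage.wf _ wellFounded_lt)
  rintro a b ⟨⟨hab, hne⟩, ha, hb⟩
  obtain ⟨j, -, rfl⟩ := mem_image.1 ha
  obtain ⟨l, -, rfl⟩ := mem_image.1 hb
  obtain rfl := hE j l hab
  have hji : j - (i + 1) ≠ Fin.last (m + 1) := by
    rintro h
    rw [sub_eq_iff_eq_add, add_comm i, ← add_assoc, Fin.last_add_one, zero_add] at h
    exact hne ⟨h ▸ rfl, h ▸ rfl⟩
  simp only [InvImage, Function.leftInverse_invFun hv _]
  rw [show j + 1 - (i + 1) = j - (i + 1) + 1 by abel, Fin.val_add_one, if_neg hji]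
  omega

end Cycle

theorem IsUnicycle.exists_cycle_of_mem {V : Type*} {E : V → V → Prop} {S : Set V} {x y : V}
    (hS : IsUnicycle E S) (hxy : E x y) (hx : x ∈ S) (hy : y ∈ S) :
    ∃ (m : ℕ) (v : Fin (m + 2) → V) (i : Fin (m + 2)), Function.Injective v ∧
      (∀ i, E (v i) (v (i + 1))) ∧ (∀ i j, E (v i) (v j) → j = i + 1) ∧
      x = v i ∧ y = v (i + 1) := by
  obtain ⟨m, v, hv, rfl, hiff⟩ := hS
  obtain ⟨i, hi, rfl⟩ := (hiff x y hx hy).1 hxy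
  refine ⟨m, v, i, hv, fun j => (hiff _ _ ⟨j, rfl⟩ ⟨j + 1, rfl⟩).2 ⟨j, rfl, rfl⟩,
    fun j l hjl => ?_, hi.symm, rfl⟩
  obtain ⟨j', hj', hl'⟩ := (hiff _ _ ⟨j, rfl⟩ ⟨l, rfl⟩).1 hjl
  rw [← hv hj', hv hl']

end IC

theorem critical_of_union_of_unicycles_general
    (n : ℕ)
    (E : Fin n → Fin n → Prop)
    (h : ∀ x y, E x y → IC.InUnicycle E x y) :
    ∀ x y, E x y →
      IC.capacityRegion (IC.removeEdge E x y) ≠ IC.capacityRegion E := by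
  intro x y hxy
  obtain ⟨-, S, hS, hx, hy⟩ := h x y hxy
  obtain ⟨m, v, i, hv, hcyc, hE, rfl, rfl⟩ := hS.exists_cycle_of_mem hxy hx hy
  obtain ⟨t, r, ht, hr, hc, hlt⟩ := IC.exists_hasCode_lt_sum_cycle hv hcyc
  exact IC.capacityRegion_ne_of_hasCode _ (fun t r => IC.sum_le_of_hasCode_of_wellFounded _
    (IC.wellFounded_removeEdge_cycle hv hE i)) ht hr hc hlt

/-- If every edge of `G` belongs to a vertex-induced subgraph
that is a unicycle, then `G` is critical: removing any edge strictly changes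
the capacity region. -/
theorem critical_of_union_of_unicycles
    (n : ℕ) (hn : 1 ≤ n)
    (E : Fin n → Fin n → Prop) (hE : ∀ i, ¬ E i i)
    (h : ∀ x y, E x y → IC.InUnicycle E x y) :
    ∀ x y, E x y →
      IC.capacityRegion (IC.removeEdge E x y) ≠ IC.capacityRegion E :=
  critical_of_union_of_unicycles_general n E h
end

section
/- Let G be an index coding instance on n ≥ 1 messages. If (i,j) is an edge of G such that A_i ⊆ A_j (the side information sets are degraded), then removing the edge (i,j) does not change the capacity region: 𝒞(G_{(i,j)}) = 𝒞(G). Consequently, if G is critical, then its side information sets are nondegraded: there is no edge (i,j) of G with A_i ⊆ A_j. -/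
namespace IC

theorem hasCode_mono {V : Type*} {E E' : V → V → Prop} (h : ∀ a b, E' a b → E a b)
    {t : V → ℕ} {r : ℕ} (hc : HasCode E' t r) : HasCode E t r := by
  obtain ⟨φ, ψ, hψ⟩ := hc
  exact ⟨φ, fun j c s => ψ j c (fun i => s ⟨i.1, h _ _ i.2⟩), fun x j => hψ x j⟩

theorem hasCode_removeEdge {n : ℕ} {E : Fin n → Fin n → Prop} {i j : Fin n}
    (hdeg : ∀ k, E k i → E k j) (hii : ¬ E i i)
    {t : Fin n → ℕ} {r : ℕ} (hc : HasCode E t r) :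
    HasCode (removeEdge E i j) t r := by
  classical
  obtain ⟨φ, ψ, hψ⟩ := hc
  refine ⟨φ, fun j' c s =>
    if hj : j' = j then
      ψ j' c (fun k =>
        if h : k.1 = i then
          cast (congrArg (fun v => Fin (t v) → Fin 2) h.symm)
            (ψ i c (fun k' => s ⟨k'.1, by subst hj; exact ⟨hdeg k'.1 k'.2,
              fun hh => by obtain ⟨h1, -⟩ := hh; have hki := k'.2; rw [h1] at hki; exact hii hki⟩⟩))
        else s ⟨k.1, k.2, fun hh => h hh.1⟩)
    else ψ j' c (fun k => s ⟨k.1, k.2, fun hh => hj hh.2⟩), ?_⟩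
  intro x j'
  beta_reduce
  by_cases hj : j' = j
  · rw [dif_pos hj]
    have hg : ∀ (A : (k : {k // E k j'}) → Fin (t k.1) → Fin 2),
        A = (fun k : {k // E k j'} => x k.1) → ψ j' (φ x) A = x j' := by
      rintro A rfl; exact hψ x j'
    apply hg
    funext k
    by_cases h : k.1 = i
    · simp only [dif_pos h]
      subst h
      exact hψ x k.1
    · simp only [dif_neg h]
  · rw [dif_neg hj]
    exact hψ x j'

theorem achievable_removeEdge_iff {n : ℕ} {E : Fin n → Fin n → Prop} {i j : Fin n}
    (hdeg : ∀ k, E k i → E k j) (hii : ¬ E i i) (R : Fin n → ℝ) :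
    Achievable (removeEdge E i j) R ↔ Achievable E R := by
  constructor
  · rintro ⟨h0, t, r, ht, hr, hc, hR⟩
    exact ⟨h0, t, r, ht, hr, hasCode_mono (fun a b hab => hab.1) hc, hR⟩
  · rintro ⟨h0, t, r, ht, hr, hc, hR⟩
    exact ⟨h0, t, r, ht, hr, hasCode_removeEdge hdeg hii hc, hR⟩

end IC

/-- If `(i, j)` is an edge of `G` with degraded side
information (`A_i ⊆ A_j`), then removing it does not change the capacity
region; consequently, if `G` is critical then its side information sets are
nondegraded. -/
theorem capacityRegion_removeEdge_of_degraded
    (n : ℕ) (hn : 1 ≤ n)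
    (E : Fin n → Fin n → Prop) (hE : ∀ i, ¬ E i i) :
    (∀ i j : Fin n, E i j → (∀ k, E k i → E k j) →
      IC.capacityRegion (IC.removeEdge E i j) = IC.capacityRegion E) ∧
    ((∀ x y, E x y →
        IC.capacityRegion (IC.removeEdge E x y) ≠ IC.capacityRegion E) →
      ¬ ∃ i j : Fin n, E i j ∧ ∀ k, E k i → E k j) := by
  have main : ∀ i j : Fin n, E i j → (∀ k, E k i → E k j) →
      IC.capacityRegion (IC.removeEdge E i j) = IC.capacityRegion E := by
    intro i j _ hdeg
    have hs : {R | IC.Achievable (IC.removeEdge E i j) R} = {R | IC.Achievable E R} :=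
      Set.ext fun R => IC.achievable_removeEdge_iff hdeg (hE i) R
    rw [IC.capacityRegion, IC.capacityRegion, hs]
  refine ⟨main, fun hcrit => ?_⟩
  rintro ⟨i, j, hij, hdeg⟩
  exact hcrit i j hij (main i j hij hdeg)
end

section
/- Let G be a finite simple directed graph without self-loops on vertex set [n] and let e be an edge of G. Then e belongs to a unicycle of G if and only if the maximum-acyclic-induced-subgraph region of G_e is a proper subset of that of G: ℛ_MAIS(G_e) ⊊ ℛ_MAIS(G). -/
/-!
Deleting an edge can only create acyclic sets, so `ℛ_MAIS(G_e) ⊆ ℛ_MAIS(G)`.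

If `e` lies on a unicycle `S`, then `S` is acyclic in `G_e`: inside `S` every edge of `G_e`
advances one step along the Hamiltonian cycle, so a cycle would go all the way round and use
`e`. The weight `1 / (|S| - 1)` on each vertex of `S` then lies in `ℛ_MAIS(G)`, because a
`G`-acyclic set misses a vertex of `S`, but violates the constraint of `S` in `ℛ_MAIS(G_e)`.

If `e` lies on no unicycle, a cycle through `e` has a chord, and the chord cuts out a
strictly shorter cycle inside the same vertex set. By induction on the length, every set
containing a cycle of `G` contains a cycle of `G_e`; the two graphs have the same acyclic
sets and hence the same region.
-/

open Fin.NatCast in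
lemma Fin.mem_of_forall_add_one_mem {n : ℕ} [NeZero n] {s : Set (Fin n)}
    (h : ∀ x ∈ s, x + 1 ∈ s) {x : Fin n} (hx : x ∈ s) (y : Fin n) : y ∈ s := by
  have hxt : ∀ t : ℕ, x + t ∈ s := by
    intro t
    induction t with
    | zero => simpa using hx
    | succ t ih => simpa [add_assoc] using h _ ih
  simpa using hxt (y - x).val

lemma Fin.castLE_castSucc_add_one {k n : ℕ} (h : k + 1 ≤ n + 1) (i : Fin k) :
    Fin.castLE h (i.castSucc + 1) = Fin.castLE h i.castSucc + 1 := by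
  have hi : Fin.castLE h i.castSucc < Fin.last n := by simp [Fin.lt_def]; omega
  ext
  rw [Fin.val_add_one_of_lt hi]
  simp

namespace IC

section Cycles

variable {V : Type*} {E E' : V → V → Prop}

lemma HasCycleIn.mono {S T : Set V} (hS : HasCycleIn E S) (hE : ∀ x y, E x y → E' x y)
    (hST : S ⊆ T) : HasCycleIn E' T := by
  obtain ⟨m, v, hv, hvS, hvE⟩ := hS
  exact ⟨m, v, hv, fun i => hST (hvS i), fun i => hE _ _ (hvE i)⟩

lemma IsUnicycle.hasCycleIn {S : Set V} (hS : IsUnicycle E S) : HasCycleIn E S := by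
  obtain ⟨m, v, hv, rfl, hiff⟩ := hS
  exact ⟨m, v, hv, fun i => ⟨i, rfl⟩, fun i => (hiff _ _ ⟨i, rfl⟩ ⟨i + 1, rfl⟩).2 ⟨i, rfl, rfl⟩⟩

lemma IsUnicycle.not_hasCycleIn_removeEdge {S : Set V} (hS : IsUnicycle E S) {a b : V}
    (ha : a ∈ S) (hb : b ∈ S) (hab : E a b) : ¬HasCycleIn (removeEdge E a b) S := by
  obtain ⟨m, v, hv, rfl, hiff⟩ := hS
  rintro ⟨k, w, -, hwS, hwE⟩
  obtain ⟨i₀, rfl, rfl⟩ := (hiff _ _ ha hb).1 hab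
  choose f hf using hwS
  have hstep : ∀ i, f (i + 1) = f i + 1 := by
    intro i
    obtain ⟨j, hj, hj'⟩ := (hiff _ _ ⟨f i, hf i⟩ ⟨f (i + 1), hf (i + 1)⟩).1 (hwE i).1
    obtain rfl : j = f i := hv (hj.trans (hf i).symm)
    exact hv ((hf (i + 1)).trans hj'.symm)
  have hrange : ∀ x ∈ Set.range f, x + 1 ∈ Set.range f := by
    rintro _ ⟨i, rfl⟩
    exact ⟨i + 1, hstep i⟩
  obtain ⟨i, rfl⟩ := Fin.mem_of_forall_add_one_mem hrange ⟨0, rfl⟩ i₀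
  exact (hwE i).2 ⟨(hf i).symm, by rw [← hf (i + 1), hstep]⟩

lemma isUnicycle_range {m : ℕ} {v : Fin (m + 2) → V} (hv : Function.Injective v)
    (hvE : ∀ i, E (v i) (v (i + 1))) (hchordless : ∀ p q, E (v p) (v q) → q = p + 1) :
    IsUnicycle E (Set.range v) := by
  refine ⟨m, v, hv, rfl, ?_⟩
  rintro _ _ ⟨p, rfl⟩ ⟨q, rfl⟩
  refine ⟨fun h => ⟨p, rfl, by rw [hchordless p q h]⟩, ?_⟩
  rintro ⟨i, hi, hi'⟩
  exact hi ▸ hi' ▸ hvE i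

/-- A chord `v p → v q` of a cycle `v` closes up the arc `v q → ⋯ → v p` into a shorter cycle. -/
lemma exists_shorter_cycle_of_chord {m : ℕ} {v : Fin (m + 2) → V} (hv : Function.Injective v)
    (hvE : ∀ i, E (v i) (v (i + 1))) {p q : Fin (m + 2)} (hpq : E (v p) (v q)) (hne : p ≠ q)
    (hq : q ≠ p + 1) :
    ∃ k < m, ∃ u : Fin (k + 2) → V, Function.Injective u ∧ Set.range u ⊆ Set.range v ∧
      ∀ j, E (u j) (u (j + 1)) := by
  obtain ⟨k, hk⟩ : ∃ k, (p - q).val = k + 1 :=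
    Nat.exists_eq_add_one.2 (Nat.pos_of_ne_zero fun h => hne (sub_eq_zero.1 (Fin.ext h)))
  have hkm : k < m := by
    have hlast : (p - q).val ≠ m + 1 := fun h => hq <| by
      have hp : p = -1 + q := sub_eq_iff_eq_add.1 (Fin.ext (by rw [h, Fin.coe_neg_one]))
      rw [hp]
      abel
    have := (p - q).isLt
    omega
  have hle : k + 2 ≤ m + 2 := by omega
  set u : Fin (k + 2) → V := fun j => v (q + Fin.castLE hle j)
  refine ⟨k, hkm, u, ?_, ?_, ?_⟩
  · exact hv.comp ((add_right_injective q).comp (Fin.castLE_injective hle))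
  · rintro _ ⟨j, rfl⟩
    exact ⟨_, rfl⟩
  · intro j
    induction j using Fin.lastCases with
    | last =>
      have hcast : Fin.castLE hle (Fin.last (k + 1)) = p - q := Fin.ext (by simp [hk])
      simpa [u, hcast] using hpq
    | cast i =>
      change E (v (q + Fin.castLE hle i.castSucc)) (v (q + Fin.castLE hle (i.castSucc + 1)))
      rw [Fin.castLE_castSucc_add_one, ← add_assoc]
      exact hvE _

lemma hasCycleIn_removeEdge_of_not_inUnicycle (hE : ∀ x, ¬E x x) {a b : V}
    (hab : ¬InUnicycle E a b) {S : Set V} (hS : HasCycleIn E S) :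
    HasCycleIn (removeEdge E a b) S := by
  obtain ⟨m, v, hv, hvS, hvE⟩ := hS
  induction m using Nat.strong_induction_on with
  | _ m ih =>
  by_cases hvab : ∃ i, v i = a ∧ v (i + 1) = b
  · by_cases hchordless : ∀ p q, E (v p) (v q) → q = p + 1
    · obtain ⟨i, rfl, rfl⟩ := hvab
      exact absurd ⟨hvE i, _, isUnicycle_range hv hvE hchordless, ⟨i, rfl⟩, ⟨i + 1, rfl⟩⟩ hab
    · push Not at hchordless
      obtain ⟨p, q, hpq, hq⟩ := hchordless
      obtain ⟨k, hk, u, hu, huv, huE⟩ :=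
        exists_shorter_cycle_of_chord hv hvE hpq (by rintro rfl; exact hE _ hpq) hq
      exact ih k hk u hu (fun j => by obtain ⟨i, hi⟩ := huv ⟨j, rfl⟩; exact hi ▸ hvS i) huE
  · push Not at hvab
    exact ⟨m, v, hv, hvS, fun i => ⟨hvE i, fun h => hvab i h.1 h.2⟩⟩

lemma HasCycleIn.two_le_card {S : Finset V} (hS : HasCycleIn E S) : 2 ≤ S.card := by
  obtain ⟨m, v, hv, hvS, -⟩ := hS
  have := Finset.card_le_card_of_injOn v (s := Finset.univ) (fun i _ => hvS i) hv.injOn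
  simp only [Finset.card_univ, Fintype.card_fin] at this
  omega

end Cycles

section Region

open Finset

variable {n : ℕ} {E E' : Fin n → Fin n → Prop}

lemma maisRegion_subset_of_hasCycleIn_imp
    (h : ∀ S : Set (Fin n), HasCycleIn E S → HasCycleIn E' S) :
    maisRegion E ⊆ maisRegion E' :=
  fun _ ⟨hR₀, hR⟩ => ⟨hR₀, fun S hS => hR S (mt (h S) hS)⟩

noncomputable def uniformOn (S : Finset (Fin n)) : Fin n → ℝ :=
  fun j => if j ∈ S then ((#S : ℝ) - 1)⁻¹ else 0

lemma sum_uniformOn (S T : Finset (Fin n)) :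
    ∑ j ∈ T, uniformOn S j = #(T ∩ S) / ((#S : ℝ) - 1) := by
  simp [uniformOn, sum_ite_mem, div_eq_mul_inv]

lemma uniformOn_mem_maisRegion {S : Finset (Fin n)} (hS : HasCycleIn E S) :
    uniformOn S ∈ maisRegion E := by
  have hS₂ : (2 : ℝ) ≤ #S := by exact_mod_cast hS.two_le_card
  refine ⟨fun j => ?_, fun T hT => ?_⟩
  · exact ite_nonneg (inv_nonneg.2 (by linarith)) le_rfl
  · have hST : ¬S ⊆ T := fun hST => hT (hS.mono (fun _ _ => id) (by exact_mod_cast hST))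
    have hTS : #(T ∩ S) + 1 ≤ #S :=
      card_lt_card ⟨inter_subset_right, fun h => hST fun _ hj => (mem_inter.1 (h hj)).1⟩
    rw [sum_uniformOn, div_le_one (by linarith)]
    have : ((#(T ∩ S) : ℕ) : ℝ) + 1 ≤ #S := by exact_mod_cast hTS
    linarith

lemma uniformOn_not_mem_maisRegion {S : Finset (Fin n)} (hS : HasCycleIn E S)
    (hS' : ¬HasCycleIn E' S) : uniformOn S ∉ maisRegion E' := by
  have hS₂ : (2 : ℝ) ≤ #S := by exact_mod_cast hS.two_le_card
  rintro ⟨-, hR⟩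
  have := hR S hS'
  rw [sum_uniformOn, inter_self, div_le_one (by linarith)] at this
  linarith

lemma maisRegion_ssubset (hE : ∀ x y, E' x y → E x y) {S : Finset (Fin n)}
    (hS : HasCycleIn E S) (hS' : ¬HasCycleIn E' S) : maisRegion E' ⊂ maisRegion E :=
  Set.ssubset_iff_subset_ne.2 ⟨maisRegion_subset_of_hasCycleIn_imp fun _ h => h.mono hE le_rfl,
    fun h => uniformOn_not_mem_maisRegion hS hS' (h ▸ uniformOn_mem_maisRegion hS)⟩

end Region

end IC

theorem inUnicycle_iff_maisRegion_ssubset_general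
    (n : ℕ) (E : Fin n → Fin n → Prop) (hE : ∀ i, ¬ E i i)
    (a b : Fin n) :
    IC.InUnicycle E a b ↔
      IC.maisRegion (IC.removeEdge E a b) ⊂ IC.maisRegion E := by
  constructor
  · rintro ⟨hab, S, hS, ha, hb⟩
    have hfin := S.toFinite
    refine IC.maisRegion_ssubset (fun _ _ h => h.1) (S := hfin.toFinset) ?_ ?_ <;>
      rw [hfin.coe_toFinset]
    · exact hS.hasCycleIn
    · exact hS.not_hasCycleIn_removeEdge ha hb hab
  · intro hss
    by_contra h
    exact hss.not_subset <| IC.maisRegion_subset_of_hasCycleIn_imp fun _ =>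
      IC.hasCycleIn_removeEdge_of_not_inUnicycle hE h

/-- An edge `(a, b)` of `G` belongs to a unicycle of `G` iff
the MAIS region of `G` with the edge removed is a proper subset of the MAIS
region of `G`. -/
theorem inUnicycle_iff_maisRegion_ssubset
    (n : ℕ) (E : Fin n → Fin n → Prop) (hE : ∀ i, ¬ E i i)
    (a b : Fin n) (hab : E a b) :
    IC.InUnicycle E a b ↔
      IC.maisRegion (IC.removeEdge E a b) ⊂ IC.maisRegion E :=
  inUnicycle_iff_maisRegion_ssubset_general n E hE a b
end

section
/- Let G be a finite simple directed graph without self-loops and let e₁ and e₂ be edges of G, neither of which belongs to any unicycle of G. Then e₂ does not belong to any unicycle of G_{e₁}, the graph obtained from G by removing e₁. -/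
/-!
Let `S` be a unicycle of `G_{e₁}` through `e₂`. If an endpoint of `e₁ = (a₁, b₁)` lies outside
`S`, then `G` and `G_{e₁}` induce the same graph on `S`, so `S` is already a unicycle of `G`
through `e₂`. Otherwise enumerate the cycle on `S` from `b₁`; it reaches `a₁` strictly before
closing up, since `a₁ → b₁` is not an edge of `G_{e₁}`. The arc `b₁ → ⋯ → a₁` together with
`e₁` is then an induced cycle of `G`, i.e. a unicycle of `G` through `e₁`.
-/

theorem Fin.castLE_add_one_eq_castLE_or_iff {n m : ℕ} (hnm : n < m) (k l : Fin (n + 2)) :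
    Fin.castLE (by omega) k + 1 = (Fin.castLE (by omega) l : Fin (m + 2)) ∨
      (k = Fin.last (n + 1) ∧ l = 0) ↔ k + 1 = l := by
  simp only [Fin.ext_iff, Fin.val_add_one, Fin.val_castLE, Fin.val_last, Fin.val_zero]
  split_ifs <;> omega

namespace IC

variable {V : Type*} {E E' : V → V → Prop}

/-- Indices live in `Fin (m + 2)`, so `v (Fin.last _) → v 0` is the closing edge. -/
def IsInducedCycle {m : ℕ} (E : V → V → Prop) (v : Fin (m + 2) → V) : Prop :=
  Function.Injective v ∧ ∀ k l, E (v k) (v l) ↔ k + 1 = l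

theorem isUnicycle_iff {S : Set V} :
    IsUnicycle E S ↔ ∃ (m : ℕ) (v : Fin (m + 2) → V), IsInducedCycle E v ∧ Set.range v = S := by
  refine exists_congr fun m => exists_congr fun v => ?_
  constructor
  · rintro ⟨hinj, rfl, hE⟩
    refine ⟨⟨hinj, fun k l => ?_⟩, rfl⟩
    simp only [hE _ _ (Set.mem_range_self k) (Set.mem_range_self l), hinj.eq_iff]
    exact ⟨fun ⟨i, hik, hil⟩ => hik ▸ hil, fun h => ⟨k, rfl, h⟩⟩
  · rintro ⟨⟨hinj, hE⟩, rfl⟩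
    refine ⟨hinj, rfl, ?_⟩
    rintro _ _ ⟨k, rfl⟩ ⟨l, rfl⟩
    simp only [hE, hinj.eq_iff]
    exact ⟨fun h => ⟨k, rfl, h⟩, fun ⟨i, hik, hil⟩ => hik ▸ hil⟩

theorem IsInducedCycle.rotate {m : ℕ} {v : Fin (m + 2) → V} (hv : IsInducedCycle E v)
    (j : Fin (m + 2)) : IsInducedCycle E (fun k => v (j + k)) :=
  ⟨hv.1.comp (add_right_injective j), fun k l => by simp only [hv.2, add_assoc, add_right_inj]⟩

theorem IsUnicycle.exists_inducedCycle_apply_zero {S : Set V} (hS : IsUnicycle E S) {b : V}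
    (hb : b ∈ S) : ∃ (m : ℕ) (v : Fin (m + 2) → V),
      IsInducedCycle E v ∧ Set.range v = S ∧ v 0 = b := by
  obtain ⟨m, v, hv, rfl⟩ := isUnicycle_iff.mp hS
  obtain ⟨j, rfl⟩ := hb
  exact ⟨m, _, hv.rotate j, (add_left_surjective j).range_comp v, by simp⟩

theorem isUnicycle_congr {S : Set V} (h : ∀ x ∈ S, ∀ y ∈ S, E x y ↔ E' x y) :
    IsUnicycle E S ↔ IsUnicycle E' S := by
  unfold IsUnicycle
  refine exists_congr fun m => exists_congr fun v => and_congr_right fun _ =>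
    and_congr_right fun _ => forall₄_congr fun x y hx hy => ?_
  rw [h x hx y hy]

theorem IsUnicycle.of_removeEdge {S : Set V} {a b : V} (hS : IsUnicycle (removeEdge E a b) S)
    (h : ¬ (a ∈ S ∧ b ∈ S)) : IsUnicycle E S :=
  (isUnicycle_congr fun x hx y hy =>
    ⟨fun hxy => hxy.1, fun hxy => ⟨hxy, by rintro ⟨rfl, rfl⟩; exact h ⟨hx, hy⟩⟩⟩).mp hS

theorem removeEdge_or_iff {a b x y : V} (hab : E a b) :
    removeEdge E a b x y ∨ (x = a ∧ y = b) ↔ E x y := by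
  by_cases h : x = a ∧ y = b
  · obtain ⟨rfl, rfl⟩ := h
    simp [hab]
  · simp [removeEdge, h]

theorem IsInducedCycle.castLE_of_removeEdge {m n : ℕ} {v : Fin (m + 2) → V} {a b : V}
    (hv : IsInducedCycle (removeEdge E a b) v) (hnm : n < m) (hab : E a b)
    (ha : v (Fin.castLE (by omega) (Fin.last (n + 1))) = a) (hb : v 0 = b) :
    IsInducedCycle E (v ∘ Fin.castLE (by omega : n + 2 ≤ m + 2)) := by
  refine ⟨hv.1.comp (Fin.castLE_injective _), fun k l => ?_⟩
  subst ha hb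
  rw [← removeEdge_or_iff hab, ← Fin.castLE_add_one_eq_castLE_or_iff hnm]
  simp only [Function.comp_apply, hv.2, hv.1.eq_iff, (Fin.castLE_injective _).eq_iff,
    (Fin.castLE_injective _).eq_iff' (Fin.castLE_zero (n := n + 1) (m := m + 1) (by omega))]

theorem IsUnicycle.inUnicycle_of_removeEdge {S : Set V} {a b : V} (hne : a ≠ b) (hab : E a b)
    (hS : IsUnicycle (removeEdge E a b) S) (ha : a ∈ S) (hb : b ∈ S) : InUnicycle E a b := by
  obtain ⟨m, v, hv, rfl, hv0⟩ := hS.exists_inducedCycle_apply_zero hb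
  obtain ⟨i, rfl⟩ := ha
  have hi0 : i ≠ 0 := by
    rintro rfl
    exact hne hv0
  have hilast : i ≠ Fin.last (m + 1) := by
    rintro rfl
    exact ((hv.2 _ 0).mpr (Fin.last_add_one _)).2 ⟨rfl, hv0⟩
  obtain ⟨n, hn⟩ : ∃ n, i.val = n + 1 :=
    Nat.exists_eq_succ_of_ne_zero (Fin.val_ne_of_ne hi0)
  have hnm : n < m := by
    have := Fin.val_ne_of_ne hilast
    simp only [Fin.val_last] at this
    omega
  have hi : Fin.castLE (by omega) (Fin.last (n + 1)) = i := Fin.ext (by simp [hn])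
  refine ⟨hab, _, isUnicycle_iff.mpr ⟨n, _, hv.castLE_of_removeEdge hnm hab (by rw [hi]) hv0, rfl⟩,
    ⟨Fin.last _, congrArg v hi⟩, ⟨0, hv0⟩⟩

end IC

theorem not_inUnicycle_removeEdge_general
    {V : Type}
    (E : V → V → Prop) (hE : ∀ v, ¬ E v v)
    (a₁ b₁ a₂ b₂ : V) (h₁ : E a₁ b₁)
    (hn₁ : ¬ IC.InUnicycle E a₁ b₁) (hn₂ : ¬ IC.InUnicycle E a₂ b₂) :
    ¬ IC.InUnicycle (IC.removeEdge E a₁ b₁) a₂ b₂ := by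
  rintro ⟨he₂, S, hS, ha₂, hb₂⟩
  by_cases hS₁ : a₁ ∈ S ∧ b₁ ∈ S
  · have hne : a₁ ≠ b₁ := fun h => hE a₁ (h ▸ h₁)
    exact hn₁ (hS.inUnicycle_of_removeEdge hne h₁ hS₁.1 hS₁.2)
  · exact hn₂ ⟨he₂.1, S, hS.of_removeEdge hS₁, ha₂, hb₂⟩

/-- If neither of the edges `e₁ = (a₁, b₁)` and
`e₂ = (a₂, b₂)` of `G` belongs to any unicycle of `G`, then `e₂` does not
belong to any unicycle of `G` with `e₁` removed. -/
theorem not_inUnicycle_removeEdge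
    {V : Type} [Fintype V]
    (E : V → V → Prop) (hE : ∀ v, ¬ E v v)
    (a₁ b₁ a₂ b₂ : V) (h₁ : E a₁ b₁) (h₂ : E a₂ b₂)
    (hn₁ : ¬ IC.InUnicycle E a₁ b₁) (hn₂ : ¬ IC.InUnicycle E a₂ b₂) :
    ¬ IC.InUnicycle (IC.removeEdge E a₁ b₁) a₂ b₂ :=
  not_inUnicycle_removeEdge_general E hE a₁ b₁ a₂ b₂ h₁ hn₁ hn₂
end
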